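/- arXiv:2512.15024 — 10 statements merged into one kernel-verified Lean document; each statement's English description precedes it below -/
import Mathlib

section
/- Suppose n ≥ 3 and there exists an allotment rule φ: Uⁿ → X on the social endowment Ω satisfying efficiency, strategy-proofness, and the equal division lower bound. Fix a preference R'ₙ ∈ U with peak t(R'ₙ) = Ω/n. Then the rule φ' on the agent set N' = {1,…,n−1} with endowment Ω' = Ω − Ω/n, defined by φ'ⱼ(R₁,…,R_{n−1}) = φⱼ(R₁,…,R_{n−1}, R'ₙ) for j ∈ N', is well-defined (i.e., allocations sum to Ω') and satisfies efficiency, strategy-proofness, and the equal division lower bound (with respect to Ω'/(n−1) = Ω/n). -/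
open Finset

/-- A preference: a total preorder on ℝ₊ with a unique global maximum (peak). -/
structure Pref where
  R : ℝ → ℝ → Prop
  total : ∀ x y : ℝ, 0 ≤ x → 0 ≤ y → R x y ∨ R y x
  trans : ∀ x y z : ℝ, R x y → R y z → R x z
  peak : ℝ
  peak_nonneg : 0 ≤ peak
  peak_max : ∀ x : ℝ, 0 ≤ x → R peak x
  peak_unique : ∀ x : ℝ, 0 ≤ x → R x peak → x = peak

/-- Strict preference. -/
def Pref.P (r : Pref) (x y : ℝ) : Prop := r.R x y ∧ ¬ r.R y x

variable {n : ℕ}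

/-- Feasible allotments: nonnegative, summing to the social endowment Ω. -/
def Feasible (Ω : ℝ) (x : Fin n → ℝ) : Prop :=
  (∀ i, 0 ≤ x i) ∧ ∑ i, x i = Ω

/-- Efficiency (Pareto optimality) of a rule. -/
def Efficient (Ω : ℝ) (φ : (Fin n → Pref) → Fin n → ℝ) : Prop :=
  ∀ R : Fin n → Pref, ¬ ∃ x : Fin n → ℝ, Feasible Ω x ∧
    (∀ i, (R i).R (x i) (φ R i)) ∧ (∃ i, (R i).P (x i) (φ R i))

/-- Strategy-proofness. -/
def StrategyProof (φ : (Fin n → Pref) → Fin n → ℝ) : Prop :=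
  ∀ (R : Fin n → Pref) (i : Fin n) (Ri' : Pref),
    (R i).R (φ R i) (φ (Function.update R i Ri') i)

/-- Own-peak-onliness. -/
def OwnPeakOnly (φ : (Fin n → Pref) → Fin n → ℝ) : Prop :=
  ∀ (R : Fin n → Pref) (i : Fin n) (Ri' : Pref),
    Ri'.peak = (R i).peak → φ (Function.update R i Ri') i = φ R i

/-- Option set of agent `i` with preference `Ri` at rule `φ`. -/
def OptionSet (φ : (Fin n → Pref) → Fin n → ℝ) (i : Fin n) (Ri : Pref) : Set ℝ :=
  {x | ∃ R : Fin n → Pref, R i = Ri ∧ φ R i = x}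

/-- `Ri'` is a manipulation of `φ` at `Ri` (for agent `i`). -/
def Manipulation (φ : (Fin n → Pref) → Fin n → ℝ) (i : Fin n) (Ri Ri' : Pref) : Prop :=
  ∃ R : Fin n → Pref, R i = Ri ∧ Ri.P (φ (Function.update R i Ri') i) (φ R i)

/-- `Ri'` is an obvious manipulation of `φ` at `Ri`. -/
def ObviousManipulation (φ : (Fin n → Pref) → Fin n → ℝ) (i : Fin n) (Ri Ri' : Pref) : Prop :=
  Manipulation φ i Ri Ri' ∧
  ∀ x' ∈ OptionSet φ i Ri', ∃ x ∈ OptionSet φ i Ri, Ri.P x' x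

/-- Non-obvious manipulability. -/
def NonObviouslyManipulable (φ : (Fin n → Pref) → Fin n → ℝ) : Prop :=
  ∀ (i : Fin n) (Ri Ri' : Pref), ¬ ObviousManipulation φ i Ri Ri'

/-- Equal division lower bound. -/
def EqualDivisionLowerBound (Ω : ℝ) (φ : (Fin n → Pref) → Fin n → ℝ) : Prop :=
  ∀ (R : Fin n → Pref) (i : Fin n), (R i).R (φ R i) (Ω / n)

/-- Equal division guarantee. -/
def EqualDivisionGuarantee (Ω : ℝ) (φ : (Fin n → Pref) → Fin n → ℝ) : Prop :=
  ∀ (R : Fin n → Pref) (i : Fin n), (R i).peak = Ω / n → φ R i = Ω / n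

/-- Unanimity. -/
def Unanimity (Ω : ℝ) (φ : (Fin n → Pref) → Fin n → ℝ) : Prop :=
  ∀ R : Fin n → Pref, ∑ i, (R i).peak = Ω → ∀ i, φ R i = (R i).peak

/-- Non-bossiness. -/
def NonBossy (φ : (Fin n → Pref) → Fin n → ℝ) : Prop :=
  ∀ (R : Fin n → Pref) (i : Fin n) (Ri' : Pref),
    φ (Function.update R i Ri') i = φ R i → φ (Function.update R i Ri') = φ R

/-- `S` is an agreeable coalition for profile `R`. -/
def AgreeableCoalition (Ω : ℝ) (R : Fin n → Pref) (S : Finset (Fin n)) : Prop :=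
  ∑ j ∈ S, (R j).peak = (S.card : ℝ) / n * Ω

/-- An agreeable selection. -/
def AgreeableSelection (Ω : ℝ) (S : (Fin n → Pref) → Finset (Fin n)) : Prop :=
  (∀ R, AgreeableCoalition Ω R (S R)) ∧
  (∀ (R : Fin n → Pref) (i : Fin n) (Ri' : Pref), Ri'.peak = (R i).peak →
    (i ∈ S R ↔ i ∈ S (Function.update R i Ri'))) ∧
  (∀ R : Fin n → Pref, AgreeableCoalition Ω R Finset.univ → S R = Finset.univ)

/-- `φ` is an agreeable rule. -/
def IsAgreeableRule (Ω : ℝ) (φ : (Fin n → Pref) → Fin n → ℝ) : Prop :=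
  ∃ S : (Fin n → Pref) → Finset (Fin n), AgreeableSelection Ω S ∧
    ∀ R i, φ R i = if i ∈ S R then (R i).peak else Ω / n

/-- the reduced rule obtained by fixing agent n's preference with peak `Ω/n`
is well-defined and inherits efficiency, strategy-proofness, and the equal division
lower bound (here `n = m+1`, `m ≥ 2`, so `n ≥ 3`). -/
theorem stmt_1 (m : ℕ) (hm : 2 ≤ m) (Ω : ℝ) (hΩ : 0 < Ω)
    (φ : (Fin (m+1) → Pref) → Fin (m+1) → ℝ)
    (hfeas : ∀ R, Feasible Ω (φ R))
    (heff : Efficient Ω φ)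
    (hsp : StrategyProof φ)
    (hedlb : EqualDivisionLowerBound Ω φ)
    (Rn' : Pref) (hRn' : Rn'.peak = Ω / (m+1 : ℝ)) :
    (∀ R' : Fin m → Pref,
        Feasible (Ω - Ω / (m+1 : ℝ)) (fun j : Fin m => φ (Fin.snoc R' Rn') j.castSucc)) ∧
    Efficient (Ω - Ω / (m+1 : ℝ)) (fun (R' : Fin m → Pref) (j : Fin m) =>
        φ (Fin.snoc R' Rn') j.castSucc) ∧
    StrategyProof (fun (R' : Fin m → Pref) (j : Fin m) => φ (Fin.snoc R' Rn') j.castSucc) ∧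
    EqualDivisionLowerBound (Ω - Ω / (m+1 : ℝ))
      (fun (R' : Fin m → Pref) (j : Fin m) => φ (Fin.snoc R' Rn') j.castSucc) := by
  have key : ∀ R' : Fin m → Pref, φ (Fin.snoc R' Rn') (Fin.last m) = Ω / (m+1 : ℝ) := by
    intro R'
    have h1 := hedlb (Fin.snoc R' Rn') (Fin.last m)
    simp only [Fin.snoc_last] at h1
    have hc : ((m+1 : ℕ) : ℝ) = (m : ℝ) + 1 := by push_cast; ring
    rw [hc, ← hRn'] at h1
    have h0 := (hfeas (Fin.snoc R' Rn')).1 (Fin.last m)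
    rw [Rn'.peak_unique _ h0 h1, hRn']
  have hmpos : (0:ℝ) < (m:ℝ) + 1 := by positivity
  have hm0 : (m:ℝ) ≠ 0 := by
    have : (0:ℝ) < (m:ℝ) := by exact_mod_cast (by omega : 0 < m)
    linarith
  have hdiv : (Ω - Ω / ((m:ℝ)+1)) / (m:ℝ) = Ω / ((m:ℝ)+1) := by
    field_simp
    ring
  have hfeas' : ∀ R' : Fin m → Pref,
      Feasible (Ω - Ω / (m+1 : ℝ)) (fun j : Fin m => φ (Fin.snoc R' Rn') j.castSucc) := by
    intro R'
    obtain ⟨hnn, hsum⟩ := hfeas (Fin.snoc R' Rn')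
    refine ⟨fun j => hnn _, ?_⟩
    rw [Fin.sum_univ_castSucc] at hsum
    rw [key R'] at hsum
    linarith
  refine ⟨hfeas', ?_, ?_, ?_⟩
  · -- Efficiency
    intro R' ⟨x', ⟨hx'nn, hx'sum⟩, hdom, j0, hj0⟩
    apply heff (Fin.snoc R' Rn')
    refine ⟨Fin.snoc x' (Ω / ((m:ℝ)+1)), ⟨?_, ?_⟩, ?_, ?_⟩
    · intro i
      induction i using Fin.lastCases with
      | last => simp only [Fin.snoc_last]; positivity
      | cast j => simpa using hx'nn j
    · rw [Fin.sum_univ_castSucc]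
      simp only [Fin.snoc_castSucc, Fin.snoc_last]
      linarith
    · intro i
      induction i using Fin.lastCases with
      | last =>
        simp only [Fin.snoc_last, key R']
        exact (Rn'.total _ _ (by positivity) (by positivity)).elim id id
      | cast j => simpa using hdom j
    · exact ⟨j0.castSucc, by simpa using hj0⟩
  · -- Strategy-proofness
    intro R' j Rj'
    have h := hsp (Fin.snoc R' Rn') j.castSucc Rj'
    simp only [Fin.snoc_castSucc] at h
    rw [← Fin.snoc_update] at h
    exact h
  · -- EDLB
    intro R' j
    have h := hedlb (Fin.snoc R' Rn') j.castSucc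
    simp only [Fin.snoc_castSucc] at h ⊢
    have hc : ((m+1 : ℕ) : ℝ) = (m : ℝ) + 1 := by push_cast; ring
    rw [hc] at h
    rwa [hdiv]
end

section
/- For n ≥ 2 agents, no allotment rule on the full domain of preferences with a unique global maximum satisfies efficiency, strategy-proofness, and the equal division lower bound simultaneously. -/
open Finset

variable {n : ℕ}

noncomputable section StmtTwoAux

/-- Build a preference from a utility function with a unique maximum on ℝ₊. -/
def mkPref (u : ℝ → ℝ) (p : ℝ) (hp : 0 ≤ p)
    (hmax : ∀ x : ℝ, 0 ≤ x → x ≠ p → u x < u p) : Pref where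
  R x y := u y ≤ u x
  total x y _ _ := le_total (u y) (u x)
  trans _ _ _ h1 h2 := le_trans h2 h1
  peak := p
  peak_nonneg := hp
  peak_max x hx := by
    by_cases h : x = p
    · subst h; exact le_refl _
    · exact (hmax x hx h).le
  peak_unique x hx h := by
    by_cases hxp : x = p
    · exact hxp
    · exact absurd h (not_le.mpr (hmax x hx hxp))

def uQfn : ℝ → ℝ := fun x => if x = 0 then 2 else x / (x + 1)

lemma uQfn_zero : uQfn 0 = 2 := if_pos rfl
lemma uQfn_ne {x : ℝ} (h : x ≠ 0) : uQfn x = x / (x + 1) := if_neg h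

lemma uQfn_lt_two {x : ℝ} (hx : 0 < x) : uQfn x < 2 := by
  rw [uQfn_ne hx.ne']
  have h1 : x / (x + 1) < 1 := by rw [div_lt_one (by linarith)]; linarith
  linarith

lemma uQfn_mono {x y : ℝ} (hx : 0 < x) (hxy : x ≤ y) : uQfn x ≤ uQfn y := by
  have hy : 0 < y := lt_of_lt_of_le hx hxy
  rw [uQfn_ne hx.ne', uQfn_ne hy.ne', div_le_div_iff₀ (by linarith) (by linarith)]
  nlinarith

lemma uQfn_strict {x y : ℝ} (hx : 0 < x) (hxy : x < y) : uQfn x < uQfn y := by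
  have hy : 0 < y := lt_trans hx hxy
  rw [uQfn_ne hx.ne', uQfn_ne hy.ne', div_lt_div_iff₀ (by linarith) (by linarith)]
  nlinarith

def prefQ : Pref := mkPref uQfn 0 le_rfl (fun x hx hne => by
  rw [uQfn_zero]; exact uQfn_lt_two (lt_of_le_of_ne hx (Ne.symm hne)))

def prefD : Pref := mkPref (fun x => -x) 0 le_rfl (fun x hx hne => by
  simp only [neg_zero]
  have : 0 < x := lt_of_le_of_ne hx (Ne.symm hne)
  linarith)

def prefE (e : ℝ) (he : 0 ≤ e) : Pref := mkPref (fun x => -|x - e|) e he (fun x _ hne => by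
  simp only [sub_self, abs_zero, neg_zero]
  have : 0 < |x - e| := abs_pos.mpr (sub_ne_zero.mpr hne)
  linarith)

lemma prefE_peak (e : ℝ) (he : 0 ≤ e) : (prefE e he).peak = e := rfl

lemma prefQ_R_iff (x y : ℝ) : prefQ.R x y ↔ uQfn y ≤ uQfn x := Iff.rfl

lemma prefQ_R_zero (x : ℝ) (hx : 0 ≤ x) : prefQ.R 0 x := prefQ.peak_max x hx

lemma prefQ_not_R_zero {x : ℝ} (hx : 0 < x) : ¬ prefQ.R x 0 := by
  rw [prefQ_R_iff, uQfn_zero]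
  exact not_le.mpr (uQfn_lt_two hx)

lemma prefQ_R_of_le {x y : ℝ} (hx : 0 < x) (h : x ≤ y) : prefQ.R y x :=
  (prefQ_R_iff y x).mpr (uQfn_mono hx h)

lemma prefQ_P_of_lt {x y : ℝ} (hx : 0 < x) (h : x < y) : prefQ.P y x :=
  ⟨uQfn_mono hx h.le, not_le.mpr (uQfn_strict hx h)⟩

lemma prefQ_alt {x c : ℝ} (hx : 0 ≤ x) (hc : 0 < c) (h : prefQ.R x c) : x = 0 ∨ c ≤ x := by
  rcases eq_or_lt_of_le hx with h0 | hxpos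
  · exact Or.inl h0.symm
  · right
    have h' : uQfn c ≤ uQfn x := h
    rw [uQfn_ne hc.ne', uQfn_ne hxpos.ne', div_le_div_iff₀ (by linarith) (by linarith)] at h'
    nlinarith

lemma prefD_le {x y : ℝ} (h : prefD.R x y) : x ≤ y := by
  have h' : -y ≤ -x := h
  linarith

lemma prefD_P_zero {c : ℝ} (hc : 0 < c) : prefD.P 0 c :=
  ⟨show -c ≤ -(0:ℝ) by linarith, show ¬ (-(0:ℝ) ≤ -c) by simp; linarith⟩

lemma pinned {n : ℕ} {Ω : ℝ} {φ : (Fin n → Pref) → Fin n → ℝ}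
    (hF : ∀ R, Feasible Ω (φ R)) (hLB : EqualDivisionLowerBound Ω φ)
    (R : Fin n → Pref) (i : Fin n) (h : (R i).peak = Ω / n) : φ R i = Ω / n := by
  have h1 := hLB R i
  rw [← h] at h1 ⊢
  exact (R i).peak_unique _ ((hF R).1 i) h1

lemma eff_contra {n : ℕ} {Ω : ℝ} {φ : (Fin n → Pref) → Fin n → ℝ}
    (hF : ∀ R, Feasible Ω (φ R)) (hEff : Efficient Ω φ)
    (R : Fin n → Pref) (i j : Fin n) (hij : i ≠ j) (a b : ℝ)
    (ha : 0 ≤ a) (hb : 0 ≤ b) (hsum : a + b = φ R i + φ R j)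
    (hi : (R i).R a (φ R i)) (hj : (R j).P b (φ R j)) : False := by
  apply hEff R
  refine ⟨Function.update (Function.update (φ R) i a) j b, ⟨?_, ?_⟩, ?_, ⟨j, ?_⟩⟩
  · intro k
    rcases eq_or_ne k j with rfl | hkj
    · simpa using hb
    · rcases eq_or_ne k i with rfl | hki
      · rw [Function.update_of_ne hkj, Function.update_self]; exact ha
      · rw [Function.update_of_ne hkj, Function.update_of_ne hki]; exact (hF R).1 k
  · have h1 : ∑ k, Function.update (Function.update (φ R) i a) j b k
        = b + ∑ k ∈ univ \ {j}, Function.update (φ R) i a k :=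
      Finset.sum_update_of_mem (Finset.mem_univ j) _ _
    have h2 : ∑ k ∈ univ \ {j}, Function.update (φ R) i a k
        = a + ∑ k ∈ (univ \ {j}) \ {i}, φ R k :=
      Finset.sum_update_of_mem (by simp [hij]) _ _
    have h3 : ∑ k ∈ univ \ {j}, φ R k
        = ∑ k ∈ (univ \ {j}) \ {i}, φ R k + φ R i :=
      (Finset.sum_eq_sum_sdiff_singleton_add (by simp [hij]) _)
    have h4 : ∑ k, φ R k = ∑ k ∈ univ \ {j}, φ R k + φ R j :=
      (Finset.sum_eq_sum_sdiff_singleton_add (Finset.mem_univ j) _)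
    have h5 := (hF R).2
    rw [h1, h2]
    linarith
  · intro k
    rcases eq_or_ne k j with rfl | hkj
    · simpa using hj.1
    · rcases eq_or_ne k i with rfl | hki
      · rw [Function.update_of_ne hkj, Function.update_self]; exact hi
      · rw [Function.update_of_ne hkj, Function.update_of_ne hki]
        have h0 : 0 ≤ φ R k := (hF R).1 k
        exact ((R k).total _ _ h0 h0).elim id id
  · simpa using hj

lemma two_sum {n : ℕ} (hn : 2 ≤ n) {Ω : ℝ} {φ : (Fin n → Pref) → Fin n → ℝ}
    (hF : ∀ R, Feasible Ω (φ R)) (hLB : EqualDivisionLowerBound Ω φ)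
    (R : Fin n → Pref) (i j : Fin n) (hij : i ≠ j)
    (h : ∀ k, k ≠ i → k ≠ j → (R k).peak = Ω / n) :
    φ R i + φ R j = 2 * (Ω / n) := by
  have hpair : ∑ k ∈ ({i, j} : Finset (Fin n)), φ R k = φ R i + φ R j :=
    Finset.sum_pair hij
  have hc : (univ \ ({i, j} : Finset (Fin n))).card = n - 2 := by
    rw [Finset.card_sdiff_of_subset (Finset.subset_univ _), Finset.card_univ, Fintype.card_fin,
      Finset.card_pair hij]
  have hrest : ∑ k ∈ univ \ ({i, j} : Finset (Fin n)), φ R k = ((n - 2 : ℕ) : ℝ) * (Ω / n) := by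
    rw [Finset.sum_congr rfl (fun k hk => ?_), Finset.sum_const, hc, nsmul_eq_mul]
    simp only [Finset.mem_sdiff, Finset.mem_insert, Finset.mem_singleton, not_or] at hk
    exact pinned hF hLB R k (h k hk.2.1 hk.2.2)
  have hsd := Finset.sum_sdiff (f := φ R) (Finset.subset_univ ({i, j} : Finset (Fin n)))
  rw [hpair, hrest, (hF R).2] at hsd
  have hne : ((n : ℝ)) ≠ 0 := by
    have : (0:ℕ) < n := by omega
    exact_mod_cast this.ne'
  have hcast : ((n - 2 : ℕ) : ℝ) = (n : ℝ) - 2 := by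
    rw [Nat.cast_sub hn]; norm_num
  have hΩeq : (n : ℝ) * (Ω / n) = Ω := by field_simp
  rw [hcast] at hsd
  linear_combination hsd - hΩeq

end StmtTwoAux
/-- no rule satisfies efficiency, strategy-proofness, and the
equal division lower bound. -/
theorem stmt_2 (n : ℕ) (hn : 2 ≤ n) (Ω : ℝ) (hΩ : 0 < Ω) :
    ¬ ∃ φ : (Fin n → Pref) → Fin n → ℝ,
      (∀ R, Feasible Ω (φ R)) ∧ Efficient Ω φ ∧ StrategyProof φ ∧
      EqualDivisionLowerBound Ω φ := by
  rintro ⟨φ, hF, hEff, hSP, hLB⟩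
  obtain ⟨m, rfl⟩ : ∃ m, n = m + 2 := ⟨n - 2, by omega⟩
  clear hn
  have hn2 : 2 ≤ m + 2 := by omega
  have hnpos : (0:ℝ) < ((m + 2 : ℕ) : ℝ) := by positivity
  set e : ℝ := Ω / ((m + 2 : ℕ) : ℝ) with he_def
  have he : 0 < e := div_pos hΩ hnpos
  set E : Pref := prefE e he.le with hE_def
  set RQQ : Fin (m + 2) → Pref :=
    fun i => if i = 0 then prefQ else if i = 1 then prefQ else E with hRQQ_def
  have h01 : (0 : Fin (m + 2)) ≠ 1 := by simp [Fin.ext_iff]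
  have hRQQ0 : RQQ 0 = prefQ := if_pos rfl
  have hRQQ1 : RQQ 1 = prefQ := by
    show (if (1 : Fin (m+2)) = 0 then prefQ else if (1 : Fin (m+2)) = 1 then prefQ else E) = prefQ
    rw [if_neg (Ne.symm h01), if_pos rfl]
  have hRQQk : ∀ k : Fin (m + 2), k ≠ 0 → k ≠ 1 → RQQ k = E := by
    intro k hk0 hk1
    show (if k = 0 then prefQ else if k = 1 then prefQ else E) = E
    rw [if_neg hk0, if_neg hk1]
  have hpeakE : E.peak = Ω / ((m + 2 : ℕ) : ℝ) := by
    rw [hE_def, prefE_peak, he_def]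
  have hpeaks : ∀ k : Fin (m+2), k ≠ 0 → k ≠ 1 → (RQQ k).peak = Ω / ((m + 2 : ℕ) : ℝ) := by
    intro k hk0 hk1; rw [hRQQk k hk0 hk1]; exact hpeakE
  -- if an agent in {0,1} reports prefD, it gets 0
  have devzero : ∀ i j : Fin (m + 2), i ≠ j → RQQ j = prefQ →
      (∀ k, k ≠ i → k ≠ j → RQQ k = E) → φ (Function.update RQQ i prefD) i = 0 := by
    intro i j hij hj hk
    set R' := Function.update RQQ i prefD with hR'
    have hR'i : R' i = prefD := Function.update_self i prefD RQQ
    have hR'j : R' j = prefQ := by rw [hR', Function.update_of_ne (Ne.symm hij), hj]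
    have hsum' : φ R' i + φ R' j = 2 * e := by
      rw [he_def]
      refine two_sum hn2 hF hLB R' i j hij (fun k hki hkj => ?_)
      rw [hR', Function.update_of_ne hki, hk k hki hkj]
      exact hpeakE
    have hle : φ R' i ≤ e := by
      have h1 := hLB R' i
      rw [hR'i, ← he_def] at h1
      exact prefD_le h1
    have hnn : 0 ≤ φ R' i := (hF R').1 i
    rcases eq_or_lt_of_le hnn with h0 | hpos
    · exact h0.symm
    · exfalso
      have hjpos : 0 < φ R' j := by linarith
      refine eff_contra hF hEff R' j i (Ne.symm hij) (φ R' j + φ R' i) 0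
        (by linarith) le_rfl (by ring) ?_ ?_
      · rw [hR'j]; exact prefQ_R_of_le hjpos (by linarith)
      · rw [hR'i]; exact prefD_P_zero hpos
  -- analysis at the profile RQQ
  have hsum : φ RQQ 0 + φ RQQ 1 = 2 * e := by
    rw [he_def]; exact two_sum hn2 hF hLB RQQ 0 1 h01 hpeaks
  have ha := hLB RQQ 0
  rw [hRQQ0, ← he_def] at ha
  have hb := hLB RQQ 1
  rw [hRQQ1, ← he_def] at hb
  have haopt := prefQ_alt ((hF RQQ).1 0) he ha
  have hbopt := prefQ_alt ((hF RQQ).1 1) he hb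
  have hb2 : φ RQQ 1 = 0 ∨ φ RQQ 1 = 2 * e := by
    rcases hbopt with h | h
    · exact Or.inl h
    · rcases haopt with h' | h'
      · right; linarith
      · exfalso
        have hae : φ RQQ 0 = e := by linarith
        have hbe : φ RQQ 1 = e := by linarith
        refine eff_contra hF hEff RQQ 0 1 h01 0 (2 * e) le_rfl (by linarith)
          (by linarith) ?_ ?_
        · rw [hRQQ0, hae]; exact prefQ_R_zero e he.le
        · rw [hRQQ1, hbe]; exact prefQ_P_of_lt he (by linarith)
  rcases hb2 with hb0 | hb2e
  · have ha2e : φ RQQ 0 = 2 * e := by linarith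
    have hdev : φ (Function.update RQQ 0 prefD) 0 = 0 := devzero 0 1 h01 hRQQ1 hRQQk
    have hsp := hSP RQQ 0 prefD
    rw [hRQQ0, ha2e, hdev] at hsp
    exact prefQ_not_R_zero (by linarith) hsp
  · have hdev : φ (Function.update RQQ 1 prefD) 1 = 0 :=
      devzero 1 0 (Ne.symm h01) hRQQ0 (fun k h1 h0 => hRQQk k h0 h1)
    have hsp := hSP RQQ 1 prefD
    rw [hRQQ1, hb2e, hdev] at hsp
    exact prefQ_not_R_zero (by linarith) hsp
end

section
/- Let φ be an agreeable rule with agreeable selection S. For every agent i and preference Rᵢ, the option set satisfies: Oᶠ(Rᵢ) = {t(Rᵢ), Ω/n} if t(Rᵢ) ≤ Ω, and Oᶠ(Rᵢ) = {Ω/n} if t(Rᵢ) > Ω. -/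
open Finset

variable {n : ℕ}

/-!
The allotment of agent `i` is always `t(Rᵢ)` or `Ω/n`, and `t(Rᵢ)` only when `i` sits in an
agreeable coalition, whose peaks sum to at most `Ω`; so `t(Rᵢ) ≤ Ω` is necessary. Both values are
attained with symmetric preferences for the other agents: if their peaks share `Ω - t(Rᵢ)` equally,
the grand coalition is agreeable and `i` receives `t(Rᵢ)`; if their peaks all equal `Ω/n`, an
agreeable coalition containing `i` forces `t(Rᵢ) = Ω/n`, so `i` receives `Ω/n` either way.
-/

noncomputable def Pref.ofPeak (p : ℝ) (hp : 0 ≤ p) : Pref where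
  R x y := |x - p| ≤ |y - p|
  total _ _ _ _ := le_total _ _
  trans _ _ _ := le_trans
  peak := p
  peak_nonneg := hp
  peak_max _ _ := by simp
  peak_unique x _ h := by simpa [sub_eq_zero] using h

lemma exists_profile_others_peak_eq {c : ℝ} (hc : 0 ≤ c) (i : Fin n) (Ri : Pref) :
    ∃ R : Fin n → Pref, R i = Ri ∧ ∀ j ≠ i, (R j).peak = c :=
  ⟨Function.update (fun _ => Pref.ofPeak c hc) i Ri, Function.update_self .., fun j hj => by
    rw [Function.update_of_ne hj]; rfl⟩

lemma sum_peak_of_forall_ne {R : Fin n → Pref} {i : Fin n} {c : ℝ}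
    (hR : ∀ j ≠ i, (R j).peak = c) {T : Finset (Fin n)} (hi : i ∈ T) :
    ∑ j ∈ T, (R j).peak = (R i).peak + ((#T : ℝ) - 1) * c := by
  rw [← add_sum_erase _ _ hi, sum_congr rfl fun j hj => hR j (ne_of_mem_erase hj), sum_const,
    card_erase_of_mem hi, nsmul_eq_mul, Nat.cast_pred (card_pos.2 ⟨i, hi⟩)]

namespace AgreeableCoalition

variable {Ω : ℝ} {R : Fin n → Pref} {T : Finset (Fin n)} {i : Fin n}

lemma peak_le (hΩ : 0 ≤ Ω) (hT : AgreeableCoalition Ω R T) (hi : i ∈ T) : (R i).peak ≤ Ω :=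
  calc (R i).peak ≤ ∑ j ∈ T, (R j).peak := single_le_sum (fun j _ => (R j).peak_nonneg) hi
    _ = #T / n * Ω := hT
    _ ≤ Ω := by
      refine mul_le_of_le_one_left hΩ (div_le_one_of_le₀ ?_ n.cast_nonneg)
      exact_mod_cast (card_le_univ T).trans (Fintype.card_fin n).le

lemma peak_eq_of_forall_ne (hT : AgreeableCoalition Ω R T) (hi : i ∈ T)
    (hR : ∀ j ≠ i, (R j).peak = Ω / n) : (R i).peak = Ω / n := by
  have hn : (n : ℝ) ≠ 0 := Nat.cast_ne_zero.2 i.pos.ne'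
  rw [AgreeableCoalition, sum_peak_of_forall_ne hR hi] at hT
  field_simp at hT
  rw [eq_div_iff hn]
  linarith

end AgreeableCoalition

lemma agreeableCoalition_univ_of_sum_eq {Ω : ℝ} {R : Fin n → Pref} (hn : n ≠ 0)
    (h : ∑ j, (R j).peak = Ω) : AgreeableCoalition Ω R univ := by
  rw [AgreeableCoalition, card_univ, Fintype.card_fin, div_self (Nat.cast_ne_zero.2 hn), one_mul]
  exact h

section OptionSet

variable {Ω : ℝ} {S : (Fin n → Pref) → Finset (Fin n)} {φ : (Fin n → Pref) → Fin n → ℝ}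

lemma optionSet_subset_pair (hφ : ∀ R i, φ R i = if i ∈ S R then (R i).peak else Ω / n)
    (i : Fin n) (Ri : Pref) : OptionSet φ i Ri ⊆ {Ri.peak, Ω / n} := by
  rintro _ ⟨R, rfl, rfl⟩
  rw [hφ]
  split_ifs <;> simp

lemma optionSet_subset_singleton_of_lt (hΩ : 0 ≤ Ω) (hS : ∀ R, AgreeableCoalition Ω R (S R))
    (hφ : ∀ R i, φ R i = if i ∈ S R then (R i).peak else Ω / n)
    {i : Fin n} {Ri : Pref} (hlt : Ω < Ri.peak) : OptionSet φ i Ri ⊆ {Ω / n} := by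
  rintro _ ⟨R, rfl, rfl⟩
  rw [hφ, if_neg fun hi => hlt.not_ge ((hS R).peak_le hΩ hi)]
  rfl

lemma div_mem_optionSet (hΩ : 0 ≤ Ω) (hS : ∀ R, AgreeableCoalition Ω R (S R))
    (hφ : ∀ R i, φ R i = if i ∈ S R then (R i).peak else Ω / n)
    (i : Fin n) (Ri : Pref) : Ω / n ∈ OptionSet φ i Ri := by
  have hc : 0 ≤ Ω / n := by positivity
  obtain ⟨R, rfl, hR⟩ := exists_profile_others_peak_eq hc i Ri
  refine ⟨R, rfl, ?_⟩
  rw [hφ]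
  split_ifs with hi
  · exact (hS R).peak_eq_of_forall_ne hi hR
  · rfl

lemma peak_mem_optionSet (hn : 1 < n) (hS : ∀ R, AgreeableCoalition Ω R univ → S R = univ)
    (hφ : ∀ R i, φ R i = if i ∈ S R then (R i).peak else Ω / n)
    {i : Fin n} {Ri : Pref} (hle : Ri.peak ≤ Ω) : Ri.peak ∈ OptionSet φ i Ri := by
  have hn' : (1 : ℝ) < n := by exact_mod_cast hn
  have hc : 0 ≤ (Ω - Ri.peak) / (n - 1) := div_nonneg (sub_nonneg.2 hle) (by linarith)
  obtain ⟨R, rfl, hR⟩ := exists_profile_others_peak_eq hc i Ri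
  have hsum : ∑ j, (R j).peak = Ω := by
    rw [sum_peak_of_forall_ne hR (mem_univ i), card_univ, Fintype.card_fin]
    field_simp [sub_ne_zero.2 hn'.ne']
    ring
  refine ⟨R, rfl, ?_⟩
  rw [hφ, hS R (agreeableCoalition_univ_of_sum_eq (by omega) hsum), if_pos (mem_univ i)]

end OptionSet

/-- the option set of any agent at an agreeable rule is
`{t(Rᵢ), Ω/n}` if `t(Rᵢ) ≤ Ω` and `{Ω/n}` otherwise. -/
theorem stmt_6 (n : ℕ) (hn : 2 ≤ n) (Ω : ℝ) (hΩ : 0 < Ω)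
    (S : (Fin n → Pref) → Finset (Fin n)) (hS : AgreeableSelection Ω S)
    (φ : (Fin n → Pref) → Fin n → ℝ)
    (hφ : ∀ R i, φ R i = if i ∈ S R then (R i).peak else Ω / n) :
    ∀ (i : Fin n) (Ri : Pref),
      OptionSet φ i Ri =
        (if Ri.peak ≤ Ω then ({Ri.peak, Ω / n} : Set ℝ) else ({Ω / n} : Set ℝ)) := by
  intro i Ri
  have hdiv := Set.singleton_subset_iff.2 (div_mem_optionSet hΩ.le hS.1 hφ i Ri)
  split_ifs with hle
  · exact (optionSet_subset_pair hφ i Ri).antisymm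
      (Set.insert_subset (peak_mem_optionSet hn hS.2.2 hφ hle) hdiv)
  · exact (optionSet_subset_singleton_of_lt hΩ.le hS.1 hφ (not_le.1 hle)).antisymm hdiv
end

section
/- Every agreeable rule is non-obviously manipulable: for every agent i and every true preference Rᵢ, there is no misreport R'ᵢ that is an obvious manipulation of the agreeable rule φ^S at Rᵢ. -/
open Finset

variable {n : ℕ}

/- Against the misreport `Ri'`, let every other agent report a preference peaked at the equal
share `Ω / n`. An agreeable coalition containing `i` then forces `i`'s peak to be `Ω / n` as
well, so `Ω / n` is among the options of `Ri'`. Every option of the truthful report is either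
`Ri`'s peak or `Ω / n`, and `Ω / n` is strictly better than neither of them. -/

namespace Pref

theorem not_P_self (r : Pref) (x : ℝ) : ¬ r.P x x := fun h => h.2 h.1

theorem not_P_peak (r : Pref) {x : ℝ} (hx : 0 ≤ x) : ¬ r.P x r.peak :=
  fun h => h.2 (r.peak_max x hx)

def distTo (p : ℝ) (hp : 0 ≤ p) : Pref where
  R x y := |x - p| ≤ |y - p|
  total _ _ _ _ := le_total _ _
  trans _ _ _ := le_trans
  peak := p
  peak_nonneg := hp
  peak_max x _ := by simp
  peak_unique x _ h := by simpa [sub_eq_zero] using h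

@[simp]
theorem distTo_peak (p : ℝ) (hp : 0 ≤ p) : (distTo p hp).peak = p := rfl

end Pref

theorem AgreeableCoalition.peak_eq_of_forall_ne_s7 {Ω : ℝ} {R : Fin n → Pref} {T : Finset (Fin n)}
    (hT : AgreeableCoalition Ω R T) {i : Fin n} (hi : i ∈ T)
    (hR : ∀ j ≠ i, (R j).peak = Ω / n) : (R i).peak = Ω / n := by
  have hn : (n : ℝ) ≠ 0 := Nat.cast_ne_zero.mpr (Fin.pos i).ne'
  have hsum : ∑ j ∈ T, ((R j).peak - Ω / n) = 0 := by
    rw [Finset.sum_sub_distrib, hT, Finset.sum_const, nsmul_eq_mul]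
    field_simp
    ring
  rw [Finset.sum_eq_single_of_mem i hi fun j _ hj => by rw [hR j hj, sub_self]] at hsum
  linarith

section AgreeableRule

variable {Ω : ℝ} {S : (Fin n → Pref) → Finset (Fin n)} {φ : (Fin n → Pref) → Fin n → ℝ}

theorem eq_peak_or_eq_of_mem_optionSet
    (hφ : ∀ R i, φ R i = if i ∈ S R then (R i).peak else Ω / n)
    {i : Fin n} {Ri : Pref} {x : ℝ} (hx : x ∈ OptionSet φ i Ri) : x = Ri.peak ∨ x = Ω / n := by
  obtain ⟨R, rfl, rfl⟩ := hx
  rw [hφ]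
  split_ifs
  exacts [Or.inl rfl, Or.inr rfl]

theorem equalShare_mem_optionSet (hΩ : 0 < Ω) (hS : ∀ R, AgreeableCoalition Ω R (S R))
    (hφ : ∀ R i, φ R i = if i ∈ S R then (R i).peak else Ω / n) (i : Fin n) (Ri : Pref) :
    Ω / n ∈ OptionSet φ i Ri := by
  let R := Function.update (fun _ => Pref.distTo (Ω / n) (by positivity)) i Ri
  have hRi : R i = Ri := Function.update_self ..
  refine ⟨R, hRi, ?_⟩
  rw [hφ]
  split_ifs with hi
  · exact (hS R).peak_eq_of_forall_ne_s7 hi fun j hj => by simp [R, hj]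
  · rfl

end AgreeableRule

theorem stmt_7_general (n : ℕ) (Ω : ℝ) (hΩ : 0 < Ω)
    (S : (Fin n → Pref) → Finset (Fin n)) (hS : AgreeableSelection Ω S)
    (φ : (Fin n → Pref) → Fin n → ℝ)
    (hφ : ∀ R i, φ R i = if i ∈ S R then (R i).peak else Ω / n) :
    NonObviouslyManipulable φ := by
  rintro i Ri Ri' ⟨-, hobvious⟩
  obtain ⟨x, hx, hbetter⟩ := hobvious _ (equalShare_mem_optionSet hΩ hS.1 hφ i Ri')
  rcases eq_peak_or_eq_of_mem_optionSet hφ hx with rfl | rfl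
  · exact Ri.not_P_peak (by positivity) hbetter
  · exact Ri.not_P_self _ hbetter

/-- every agreeable rule is non-obviously manipulable. -/
theorem stmt_7 (n : ℕ) (hn : 2 ≤ n) (Ω : ℝ) (hΩ : 0 < Ω)
    (S : (Fin n → Pref) → Finset (Fin n)) (hS : AgreeableSelection Ω S)
    (φ : (Fin n → Pref) → Fin n → ℝ)
    (hφ : ∀ R i, φ R i = if i ∈ S R then (R i).peak else Ω / n) :
    NonObviouslyManipulable φ :=
  stmt_7_general n Ω hΩ S hS φ hφ
end

section
/- If an allotment rule φ satisfies unanimity, non-obvious manipulability, own-peak-onliness, and the equal division guarantee, then for every agent i and preference Rᵢ the option set equals {t(Rᵢ), Ω/n} if t(Rᵢ) ≤ Ω and {Ω/n} if t(Rᵢ) > Ω. -/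
open Finset

variable {n : ℕ}

/-- A preference built from a utility function. -/
def prefOfUtil (u : ℝ → ℝ) (p : ℝ) (hp : 0 ≤ p)
    (hmax : ∀ x, u x ≤ u p) (huniq : ∀ x, u p ≤ u x → x = p) : Pref where
  R x y := u y ≤ u x
  total x y _ _ := le_total _ _
  trans _ _ _ h1 h2 := le_trans h2 h1
  peak := p
  peak_nonneg := hp
  peak_max x _ := hmax x
  peak_unique x _ h := huniq x h

/-- A simple single-peaked preference with peak `p`. -/
noncomputable def simplePref (p : ℝ) (hp : 0 ≤ p) : Pref :=
  prefOfUtil (fun x => -|x - p|) p hp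
    (fun x => by simp [neg_nonpos.mpr (abs_nonneg _)])
    (fun x h => by
      simp only [sub_self, abs_zero, neg_zero] at h
      have h1 : |x - p| ≤ 0 := by linarith
      have := abs_eq_zero.mp (le_antisymm h1 (abs_nonneg _))
      linarith)

/-- Utility with best point `p`, second-best `c`. -/
noncomputable def spu (p c : ℝ) (x : ℝ) : ℝ := if x = p then 2 else if x = c then 1 else 0

/-- Preference with peak `p` ranking `c` strictly above everything else. -/
lemma spu_self (p c : ℝ) : spu p c p = 2 := by unfold spu; rw [if_pos rfl]

noncomputable def secondPref (p c : ℝ) (hp : 0 ≤ p) : Pref :=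
  prefOfUtil (spu p c) p hp
    (fun x => by rw [spu_self]; unfold spu; split_ifs <;> norm_num)
    (fun x h => by
      rw [spu_self] at h
      unfold spu at h
      split_ifs at h with h1 h2
      · exact h1
      · norm_num at h
      · norm_num at h)

lemma secondPref_P {p c : ℝ} (hp : 0 ≤ p) {x : ℝ} (hx1 : x ≠ p) (hx2 : x ≠ c) :
    (secondPref p c hp).P c x := by
  have hux : spu p c x = 0 := by unfold spu; rw [if_neg hx1, if_neg hx2]
  have huc : (1:ℝ) ≤ spu p c c := by
    unfold spu; by_cases hcp : c = p <;> simp [hcp]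
  constructor
  · show spu p c x ≤ spu p c c
    rw [hux]; linarith
  · show ¬ spu p c c ≤ spu p c x
    rw [hux]; intro h; linarith

lemma optionSet_peak_eq {n : ℕ} {φ : (Fin n → Pref) → Fin n → ℝ} (hopo : OwnPeakOnly φ)
    (i : Fin n) (Ri Ri' : Pref) (hpk : Ri'.peak = Ri.peak) :
    OptionSet φ i Ri' ⊆ OptionSet φ i Ri := by
  rintro x ⟨R, hRi, hx⟩
  refine ⟨Function.update R i Ri, Function.update_self i Ri R, ?_⟩
  rw [hopo R i Ri (by rw [hRi, hpk]), hx]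

/-- for any rule satisfying unanimity, non-obvious manipulability,
own-peak-onliness, and the equal division guarantee, the option set of each agent
is `{t(Rᵢ), Ω/n}` if `t(Rᵢ) ≤ Ω` and `{Ω/n}` otherwise. -/
theorem stmt_9 (n : ℕ) (hn : 2 ≤ n) (Ω : ℝ) (hΩ : 0 < Ω)
    (φ : (Fin n → Pref) → Fin n → ℝ)
    (hfeas : ∀ R, Feasible Ω (φ R))
    (hun : Unanimity Ω φ)
    (hnom : NonObviouslyManipulable φ)
    (hopo : OwnPeakOnly φ)
    (hedg : EqualDivisionGuarantee Ω φ) :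
    ∀ (i : Fin n) (Ri : Pref),
      OptionSet φ i Ri =
        (if Ri.peak ≤ Ω then ({Ri.peak, Ω / n} : Set ℝ) else ({Ω / n} : Set ℝ)) := by
  intro i Ri
  have hnR : (2:ℝ) ≤ (n:ℝ) := by exact_mod_cast hn
  have hne : (n:ℝ) ≠ 0 := by linarith
  have hdiv : 0 ≤ Ω / n := le_of_lt (by positivity)
  set p := Ri.peak with hpdef
  have hp : 0 ≤ p := Ri.peak_nonneg
  have hcard : (Finset.univ.erase i).card = n - 1 := by
    rw [Finset.card_erase_of_mem (Finset.mem_univ i), Finset.card_univ, Fintype.card_fin]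
  -- every option is at most Ω
  have hbound : ∀ R : Fin n → Pref, φ R i ≤ Ω := by
    intro R
    have h := hfeas R
    calc φ R i ≤ ∑ j, φ R j := Finset.single_le_sum (fun j _ => h.1 j) (Finset.mem_univ i)
    _ = Ω := h.2
  -- key step via non-obvious manipulability: options lie in {p, Ω/n}
  have hsub : OptionSet φ i Ri ⊆ {p, Ω / n} := by
    intro x hx
    by_contra hxn
    simp only [Set.mem_insert_iff, Set.mem_singleton_iff, not_or] at hxn
    obtain ⟨hxp, hxc⟩ := hxn
    have hx' : x ∈ OptionSet φ i (secondPref p (Ω / n) hp) :=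
      optionSet_peak_eq hopo i (secondPref p (Ω / n) hp) Ri rfl hx
    obtain ⟨R, hRi, hφ⟩ := hx'
    apply hnom i (secondPref p (Ω / n) hp) (simplePref (Ω / n) hdiv)
    have hdev : ∀ R' : Fin n → Pref, R' i = simplePref (Ω / n) hdiv → φ R' i = Ω / n := by
      intro R' h
      exact hedg R' i (by rw [h]; rfl)
    constructor
    · refine ⟨R, hRi, ?_⟩
      rw [hφ, hdev _ (Function.update_self i _ R)]
      exact secondPref_P hp hxp hxc
    · intro x' hx'
      obtain ⟨R', hR', hφ'⟩ := hx'
      have hx'e : x' = Ω / n := by rw [← hφ']; exact hdev R' hR'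
      subst hx'e
      exact ⟨x, ⟨R, hRi, hφ⟩, secondPref_P hp hxp hxc⟩
  -- Ω/n is always an option
  have hmemE : Ω / n ∈ OptionSet φ i Ri := by
    set R := Function.update (fun _ : Fin n => simplePref (Ω / n) hdiv) i Ri with hR
    have hRi : R i = Ri := by rw [hR]; simp
    have hxO : φ R i ∈ OptionSet φ i Ri := ⟨R, hRi, rfl⟩
    rcases Set.mem_insert_iff.mp (hsub hxO) with h | h
    · -- φ R i = p ; feasibility forces p = Ω/n
      have hoth : ∀ j ∈ Finset.univ.erase i, φ R j = Ω / n := by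
        intro j hj
        apply hedg
        rw [hR, Function.update_of_ne (Finset.ne_of_mem_erase hj)]; rfl
      have hsum : φ R i + ∑ j ∈ Finset.univ.erase i, φ R j = Ω := by
        rw [Finset.add_sum_erase _ _ (Finset.mem_univ i)]; exact (hfeas R).2
      have hsum2 : ∑ j ∈ Finset.univ.erase i, φ R j = ((n:ℝ) - 1) * (Ω / n) := by
        rw [Finset.sum_congr rfl hoth, Finset.sum_const, hcard, nsmul_eq_mul,
          Nat.cast_sub (by omega), Nat.cast_one]
      have hpn : p = Ω / n := by
        rw [h, hsum2] at hsum
        field_simp at hsum ⊢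
        nlinarith [hsum]
      rw [h, hpn] at hxO
      exact hxO
    · rw [h] at hxO; exact hxO
  -- when p ≤ Ω, the peak is an option (via unanimity)
  have hmemP : p ≤ Ω → p ∈ OptionSet φ i Ri := by
    intro hpΩ
    have hne1 : (n:ℝ) - 1 ≠ 0 := by linarith
    have hq : 0 ≤ (Ω - p) / ((n:ℝ) - 1) := div_nonneg (by linarith) (by linarith)
    set R := Function.update (fun _ : Fin n => simplePref ((Ω - p) / ((n:ℝ) - 1)) hq) i Ri
      with hR
    have hRi : R i = Ri := by rw [hR]; simp
    have hoth : ∀ j ∈ Finset.univ.erase i, (R j).peak = (Ω - p) / ((n:ℝ) - 1) := by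
      intro j hj
      rw [hR, Function.update_of_ne (Finset.ne_of_mem_erase hj)]; rfl
    have hsum : ∑ j, (R j).peak = Ω := by
      rw [← Finset.add_sum_erase _ _ (Finset.mem_univ i), hRi,
        Finset.sum_congr rfl hoth, Finset.sum_const, hcard, nsmul_eq_mul,
        Nat.cast_sub (by omega), Nat.cast_one, mul_div_cancel₀ _ hne1]
      ring
    have := hun R hsum i
    rw [hRi] at this
    exact ⟨R, hRi, this⟩
  split_ifs with hpΩ
  · apply Set.Subset.antisymm hsub
    intro x hx
    rcases Set.mem_insert_iff.mp hx with h | h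
    · rw [h]; exact hmemP hpΩ
    · rw [Set.mem_singleton_iff.mp h]; exact hmemE
  · apply Set.Subset.antisymm
    · intro x hx
      rcases Set.mem_insert_iff.mp (hsub hx) with h | h
      · exfalso
        obtain ⟨R, _, hφ⟩ := hx
        have := hbound R
        rw [hφ, h] at this
        linarith
      · exact h
    · intro x hx
      rw [Set.mem_singleton_iff.mp hx]; exact hmemE
end

section
/- A rule satisfies unanimity, non-obvious manipulability, own-peak-onliness, and the equal division guarantee if and only if it is an agreeable rule, i.e., there exists an agreeable selection S such that φᵢ(R) = t(Rᵢ) when i ∈ S(R) and φᵢ(R) = Ω/n otherwise. -/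
open Finset

variable {n : ℕ}

/-! ### Auxiliary constructions -/

/-- Preference induced by a utility function with unique maximum at `p`. -/
noncomputable def prefU (u : ℝ → ℝ) (p : ℝ) (hp : 0 ≤ p)
    (hmax : ∀ x, x ≠ p → u x < u p) : Pref where
  R x y := u y ≤ u x
  total x y _ _ := le_total (u y) (u x)
  trans _ _ _ h1 h2 := le_trans h2 h1
  peak := p
  peak_nonneg := hp
  peak_max x _ := by
    rcases eq_or_ne x p with h | h
    · simp [h]
    · exact (hmax x h).le
  peak_unique x _ hx := by
    by_contra h
    exact absurd hx (not_le.mpr (hmax x h))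

@[simp] lemma prefU_peak (u : ℝ → ℝ) (p : ℝ) (hp : 0 ≤ p)
    (hmax : ∀ x, x ≠ p → u x < u p) : (prefU u p hp hmax).peak = p := rfl

lemma prefU_R (u : ℝ → ℝ) (p : ℝ) (hp : 0 ≤ p)
    (hmax : ∀ x, x ≠ p → u x < u p) (x y : ℝ) :
    (prefU u p hp hmax).R x y ↔ u y ≤ u x := Iff.rfl

/-- A symmetric single-peaked preference with peak `p`. -/
noncomputable def prefPeak (p : ℝ) (hp : 0 ≤ p) : Pref :=
  prefU (fun x => -|x - p|) p hp (by
    intro x hx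
    simp only [sub_self, abs_zero, neg_zero]
    exact neg_lt_zero.mpr (abs_pos.mpr (sub_ne_zero.mpr hx)))

@[simp] lemma prefPeak_peak (p : ℝ) (hp : 0 ≤ p) : (prefPeak p hp).peak = p := rfl

/-- Key lemma: under NOM, own-peak-onliness and the equal division guarantee,
every allotment is either the agent's peak or equal division. -/
lemma key_range {n : ℕ} {Ω : ℝ} (hΩ : 0 < Ω)
    {φ : (Fin n → Pref) → Fin n → ℝ}
    (hNOM : NonObviouslyManipulable φ) (hOPO : OwnPeakOnly φ)
    (hEDG : EqualDivisionGuarantee Ω φ) (R : Fin n → Pref) (i : Fin n) :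
    φ R i = (R i).peak ∨ φ R i = Ω / n := by
  by_contra hcon
  push_neg at hcon
  obtain ⟨ha1, ha2⟩ := hcon
  have hnpos : (0:ℝ) < n := by exact_mod_cast i.pos
  have hdiv : (0:ℝ) ≤ Ω / n := div_nonneg hΩ.le hnpos.le
  set p : ℝ := (R i).peak with hp
  set a : ℝ := φ R i with haa
  have hpn : (Ω / n : ℝ) ≠ p := by
    intro h
    exact ha2 (hEDG R i h.symm)
  -- the utility function for the true preference used in the manipulation
  set u : ℝ → ℝ := fun x => if x = p then (1:ℝ) else if x = Ω / n then 0 else -1 with hu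
  have hmax : ∀ x, x ≠ p → u x < u p := by
    intro x hx
    simp only [hu, if_pos rfl, if_neg hx]
    split <;> norm_num
  have huΩ : u (Ω / n) = 0 := by simp [hu, if_neg hpn]
  have hua : u a = -1 := by simp only [hu, if_neg ha1, if_neg ha2]
  set Rt : Pref := prefU u p ((R i).peak_nonneg) hmax with hRt
  set Rm : Pref := prefPeak (Ω / n) hdiv with hRm
  have hPt : Rt.P (Ω / n) a := by
    constructor
    · show u a ≤ u (Ω / n); rw [hua, huΩ]; norm_num
    · show ¬ u (Ω / n) ≤ u a; rw [hua, huΩ]; norm_num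
  set R₀ : Fin n → Pref := Function.update R i Rt with hR₀
  have hR₀i : R₀ i = Rt := Function.update_self i Rt R
  have hφR₀ : φ R₀ i = a := hOPO R i Rt rfl
  have hφm : φ (Function.update R₀ i Rm) i = Ω / n := by
    refine hEDG _ i ?_
    rw [Function.update_self, hRm, prefPeak_peak]
  have hman : Manipulation φ i Rt Rm := by
    refine ⟨R₀, hR₀i, ?_⟩
    rw [hφm, hφR₀]
    exact hPt
  have hobv : ObviousManipulation φ i Rt Rm := by
    refine ⟨hman, ?_⟩
    intro x' hx'
    obtain ⟨R₁, hR₁i, hx'eq⟩ := hx'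
    have hx'Ω : x' = Ω / n := by
      rw [← hx'eq]
      exact hEDG R₁ i (by rw [hR₁i]; rfl)
    exact ⟨a, ⟨R₀, hR₀i, hφR₀⟩, hx'Ω ▸ hPt⟩
  exact hNOM i Rt Rm hobv

/-- a rule satisfies unanimity, non-obvious manipulability,
own-peak-onliness and the equal division guarantee if and only if it is an
agreeable rule. -/
theorem stmt_10 (n : ℕ) (hn : 2 ≤ n) (Ω : ℝ) (hΩ : 0 < Ω)
    (φ : (Fin n → Pref) → Fin n → ℝ) :
    ((∀ R, Feasible Ω (φ R)) ∧ Unanimity Ω φ ∧ NonObviouslyManipulable φ ∧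
      OwnPeakOnly φ ∧ EqualDivisionGuarantee Ω φ) ↔ IsAgreeableRule Ω φ := by
  classical
  have hnpos : (0:ℝ) < n := by
    have : 0 < n := lt_of_lt_of_le (by norm_num) hn
    exact_mod_cast this
  have hn0 : (n:ℝ) ≠ 0 := ne_of_gt hnpos
  have hdiv : (0:ℝ) ≤ Ω / n := div_nonneg hΩ.le hnpos.le
  constructor
  · rintro ⟨hF, hU, hNOM, hOPO, hEDG⟩
    refine ⟨fun R => Finset.univ.filter (fun i => φ R i = (R i).peak), ⟨?_, ?_, ?_⟩, ?_⟩
    · -- agreeable coalition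
      intro R
      unfold AgreeableCoalition
      set S := Finset.univ.filter (fun i => φ R i = (R i).peak) with hS
      set T := Finset.univ.filter (fun i => ¬ φ R i = (R i).peak) with hT
      have hsplit : ∑ j ∈ S, φ R j + ∑ j ∈ T, φ R j = Ω := by
        rw [hS, hT, Finset.sum_filter_add_sum_filter_not]
        exact (hF R).2
      have h1 : ∑ j ∈ S, φ R j = ∑ j ∈ S, (R j).peak :=
        Finset.sum_congr rfl (fun j hj => (Finset.mem_filter.mp hj).2)
      have h2 : ∑ j ∈ T, φ R j = (T.card : ℝ) * (Ω / n) := by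
        rw [Finset.sum_congr rfl (fun j hj => ?_), Finset.sum_const, nsmul_eq_mul]
        rcases key_range hΩ hNOM hOPO hEDG R j with h | h
        · exact absurd h (Finset.mem_filter.mp hj).2
        · exact h
      have hcard : (S.card : ℝ) + (T.card : ℝ) = n := by
        have := Finset.card_filter_add_card_filter_not
          (s := (Finset.univ : Finset (Fin n))) (p := fun i => φ R i = (R i).peak)
        have h' : S.card + T.card = n := by simpa [hS, hT] using this
        exact_mod_cast h'
      rw [h1, h2] at hsplit
      field_simp at hsplit ⊢
      nlinarith [hsplit, hcard]
    · -- own-peak membership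
      intro R i Ri' hpk
      simp only [Finset.mem_filter, Finset.mem_univ, true_and, Function.update_self,
        hOPO R i Ri' hpk, hpk]
    · -- unanimity selects everyone
      intro R hA
      have hsum : ∑ i, (R i).peak = Ω := by
        unfold AgreeableCoalition at hA
        rw [Finset.card_univ, Fintype.card_fin] at hA
        rw [hA, div_self hn0, one_mul]
      apply Finset.eq_univ_iff_forall.mpr
      intro i
      simp only [Finset.mem_filter, Finset.mem_univ, true_and]
      exact hU R hsum i
    · -- formula
      intro R i
      by_cases h : φ R i = (R i).peak
      · rw [if_pos (by simp [h])]
        exact h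
      · rw [if_neg (by simp [h])]
        rcases key_range hΩ hNOM hOPO hEDG R i with h' | h'
        · exact absurd h' h
        · exact h'
  · rintro ⟨S, ⟨hSc, hSo, hSu⟩, hφ⟩
    have hcard_le : ∀ R : Fin n → Pref, ((S R).card : ℝ) ≤ n := by
      intro R
      have : (S R).card ≤ n := by
        simpa using Finset.card_le_univ (S R)
      exact_mod_cast this
    refine ⟨?_, ?_, ?_, ?_, ?_⟩
    · -- Feasible
      intro R
      constructor
      · intro i
        rw [hφ]
        split
        · exact (R i).peak_nonneg
        · exact hdiv
      · have h0 : ∑ i, φ R i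
            = ∑ i ∈ Finset.univ.filter (fun i => i ∈ S R), φ R i
              + ∑ i ∈ Finset.univ.filter (fun i => ¬ i ∈ S R), φ R i :=
          (Finset.sum_filter_add_sum_filter_not _ _ _).symm
        have hfe : Finset.univ.filter (fun i => i ∈ S R) = S R := by
          ext j; simp
        have h1 : ∑ i ∈ Finset.univ.filter (fun i => i ∈ S R), φ R i
            = ∑ i ∈ S R, (R i).peak := by
          rw [hfe]
          exact Finset.sum_congr rfl (fun j hj => by rw [hφ, if_pos hj])
        have h2 : ∑ i ∈ Finset.univ.filter (fun i => ¬ i ∈ S R), φ R i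
            = ((Finset.univ.filter (fun i => ¬ i ∈ S R)).card : ℝ) * (Ω / n) := by
          rw [Finset.sum_congr rfl (fun j hj => by
            rw [hφ, if_neg (Finset.mem_filter.mp hj).2]), Finset.sum_const, nsmul_eq_mul]
        have hcard : ((S R).card : ℝ)
            + ((Finset.univ.filter (fun i => ¬ i ∈ S R)).card : ℝ) = n := by
          have := Finset.card_filter_add_card_filter_not
            (s := (Finset.univ : Finset (Fin n))) (p := fun i => i ∈ S R)
          have h' : (S R).card + (Finset.univ.filter (fun i => ¬ i ∈ S R)).card = n := by
            simpa [hfe] using this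
          exact_mod_cast h'
        have hA := hSc R
        unfold AgreeableCoalition at hA
        rw [h0, h1, h2, hA]
        field_simp
        nlinarith [hcard]
    · -- Unanimity
      intro R hsum i
      have huniv : S R = Finset.univ := by
        apply hSu
        unfold AgreeableCoalition
        rw [Finset.card_univ, Fintype.card_fin, hsum, div_self hn0, one_mul]
      rw [hφ, huniv, if_pos (Finset.mem_univ i)]
    · -- NOM
      rintro i Ri Ri' ⟨hman, hobv⟩
      have hΩmem : Ω / n ∈ OptionSet φ i Ri' := by
        by_cases hpk : Ri'.peak = Ω / n
        · refine ⟨fun _ => Ri', rfl, ?_⟩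
          rw [hφ]
          split
          · exact hpk
          · rfl
        · set R₀ : Fin n → Pref :=
            Function.update (fun _ => prefPeak (Ω + 1) (by linarith)) i Ri' with hR₀
          have hR₀i : R₀ i = Ri' := by rw [hR₀]; simp
          have hnotin : i ∉ S R₀ := by
            intro hin
            have hA := hSc R₀
            unfold AgreeableCoalition at hA
            by_cases hex : ∃ j ∈ S R₀, j ≠ i
            · obtain ⟨j, hj, hji⟩ := hex
              have hpkj : (R₀ j).peak = Ω + 1 := by
                rw [hR₀, Function.update_of_ne hji, prefPeak_peak]
              have hle : Ω + 1 ≤ ∑ k ∈ S R₀, (R₀ k).peak := by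
                rw [← hpkj]
                exact Finset.single_le_sum (fun k _ => (R₀ k).peak_nonneg) hj
              have hub : ((S R₀).card : ℝ) / n * Ω ≤ Ω := by
                have h1 : ((S R₀).card : ℝ) / n ≤ 1 :=
                  (div_le_one hnpos).mpr (hcard_le R₀)
                nlinarith
              linarith [hA ▸ hle]
            · push_neg at hex
              have hsingle : S R₀ = {i} := by
                apply Finset.eq_singleton_iff_unique_mem.mpr
                exact ⟨hin, fun j hj => hex j hj⟩
              rw [hsingle, Finset.sum_singleton, Finset.card_singleton, hR₀i] at hA
              exact hpk (by rw [hA]; ring)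
          exact ⟨R₀, hR₀i, by rw [hφ, if_neg hnotin]⟩
      obtain ⟨x, hx, hPx⟩ := hobv _ hΩmem
      obtain ⟨R₁, hR₁i, hxeq⟩ := hx
      rw [hφ] at hxeq
      by_cases hmem : i ∈ S R₁
      · rw [if_pos hmem] at hxeq
        exact hPx.2 (hxeq ▸ hR₁i ▸ (Ri.peak_max (Ω / n) hdiv))
      · rw [if_neg hmem] at hxeq
        rw [← hxeq] at hPx
        exact hPx.2 hPx.1
    · -- OwnPeakOnly
      intro R i Ri' hpk
      rw [hφ, hφ, Function.update_self, hpk]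
      by_cases hi : i ∈ S R
      · rw [if_pos hi, if_pos ((hSo R i Ri' hpk).mp hi)]
      · rw [if_neg hi, if_neg (fun h => hi ((hSo R i Ri' hpk).mpr h))]
    · -- EqualDivisionGuarantee
      intro R i hpk
      rw [hφ]
      split
      · exact hpk
      · rfl
end

section
/- If an agreeable rule φ^S is non-bossy, then both φ^S and its refined agreeable selection S° are peaks-only: for any two profiles R, R' with t(Rᵢ) = t(R'ᵢ) for all i, we have φ^S(R) = φ^S(R') and S°(R) = S°(R'). -/
open Finset

variable {n : ℕ}

/-- The refined agreeable selection: members of the selected coalition whose peak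
differs from Ω/n. -/
noncomputable def refinedSel (Ω : ℝ) {n : ℕ} (S : (Fin n → Pref) → Finset (Fin n))
    (R : Fin n → Pref) : Finset (Fin n) :=
  (S R).filter (fun i => (R i).peak ≠ Ω / n)


/-- if an agreeable rule is non-bossy then both the rule and its
refined agreeable selection are peaks-only. -/
theorem stmt_14 (n : ℕ) (hn : 2 ≤ n) (Ω : ℝ) (hΩ : 0 < Ω)
    (S : (Fin n → Pref) → Finset (Fin n)) (hS : AgreeableSelection Ω S)
    (φ : (Fin n → Pref) → Fin n → ℝ)
    (hφ : ∀ R i, φ R i = if i ∈ S R then (R i).peak else Ω / n)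
    (hnb : NonBossy φ) :
    ∀ R R' : Fin n → Pref, (∀ i, (R i).peak = (R' i).peak) →
      φ R = φ R' ∧ refinedSel Ω S R = refinedSel Ω S R' := by
  intro R R' hpk
  -- single-coordinate step
  have step : ∀ (P : Fin n → Pref) (i : Fin n) (Ri' : Pref), Ri'.peak = (P i).peak →
      φ (Function.update P i Ri') = φ P := by
    intro P i Ri' hp
    apply hnb
    rw [hφ, hφ]
    have hmem := hS.2.1 P i Ri' hp
    simp only [Function.update_self]
    by_cases h : i ∈ S P
    · rw [if_pos (hmem.mp h), if_pos h, hp]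
    · rw [if_neg (fun hc => h (hmem.mpr hc)), if_neg h]
  -- hybrid profiles
  have key : ∀ T : Finset (Fin n),
      φ (fun i => if i ∈ T then R' i else R i) = φ R := by
    intro T
    induction T using Finset.induction_on with
    | empty => simp
    | @insert i T hi ih =>
      have heq : (fun j => if j ∈ insert i T then R' j else R j) =
          Function.update (fun j => if j ∈ T then R' j else R j) i (R' i) := by
        funext j
        by_cases hj : j = i
        · subst hj; simp [hi]
        · simp [Function.update_of_ne hj, hj]
      rw [heq, step _ i (R' i) (by simp [hi, (hpk i).symm]), ih]
  have hφeq : φ R = φ R' := by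
    have := key Finset.univ
    simp only [Finset.mem_univ, if_true] at this
    exact this.symm
  refine ⟨hφeq, ?_⟩
  -- characterization of refinedSel via φ
  have char : ∀ (P : Fin n → Pref) (j : Fin n),
      j ∈ refinedSel Ω S P ↔ φ P j ≠ Ω / n := by
    intro P j
    simp only [refinedSel, Finset.mem_filter, hφ]
    constructor
    · rintro ⟨hj, hne⟩; rw [if_pos hj]; exact hne
    · intro h
      by_cases hj : j ∈ S P
      · rw [if_pos hj] at h; exact ⟨hj, h⟩
      · rw [if_neg hj] at h; exact absurd rfl h
  ext j
  rw [char, char, hφeq]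
end

section
/- An agreeable rule φ^S is non-bossy if and only if its refined agreeable selection S° is peaks-only and satisfies: for all profiles R, agents i, and preferences R'ᵢ, if i ∉ S°(R) ∪ S°(R'ᵢ,R₋ᵢ) then S°(R) = S°(R'ᵢ,R₋ᵢ). -/
open Finset

variable {n : ℕ}

lemma aux_L1 {n : ℕ} (Ω : ℝ) (S : (Fin n → Pref) → Finset (Fin n))
    (φ : (Fin n → Pref) → Fin n → ℝ)
    (hφ : ∀ R i, φ R i = if i ∈ S R then (R i).peak else Ω / n)
    (R : Fin n → Pref) (j : Fin n) :
    j ∈ refinedSel Ω S R ↔ φ R j ≠ Ω / n := by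
  by_cases h : j ∈ S R <;> simp [refinedSel, hφ, h]

lemma aux_L0 {n : ℕ} (Ω : ℝ) (S : (Fin n → Pref) → Finset (Fin n))
    (φ : (Fin n → Pref) → Fin n → ℝ)
    (hφ : ∀ R i, φ R i = if i ∈ S R then (R i).peak else Ω / n)
    (R : Fin n → Pref) (j : Fin n) :
    φ R j = if j ∈ refinedSel Ω S R then (R j).peak else Ω / n := by
  by_cases h : j ∈ S R
  · by_cases hp : (R j).peak = Ω / n <;> simp [refinedSel, hφ, h, hp]
  · simp [refinedSel, hφ, h]

lemma aux_peaks_only {n : ℕ} (Ω : ℝ) (S : (Fin n → Pref) → Finset (Fin n))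
    (hS : AgreeableSelection Ω S)
    (φ : (Fin n → Pref) → Fin n → ℝ)
    (hφ : ∀ R i, φ R i = if i ∈ S R then (R i).peak else Ω / n)
    (hnb : NonBossy φ) :
    ∀ R R' : Fin n → Pref, (∀ i, (R i).peak = (R' i).peak) → φ R = φ R' := by
  classical
  have key : ∀ (k : ℕ) (R R' : Fin n → Pref), (∀ i, (R i).peak = (R' i).peak) →
      (Finset.univ.filter fun i => R i ≠ R' i).card ≤ k → φ R = φ R' := by
    intro k
    induction k with
    | zero =>
      intro R R' hpk hc
      have hall : ∀ i, R i = R' i := by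
        intro i
        by_contra hne
        have hi : i ∈ Finset.univ.filter fun i => R i ≠ R' i := by simp [hne]
        have := Finset.card_pos.mpr ⟨i, hi⟩
        omega
      exact congrArg φ (funext hall)
    | succ k ih =>
      intro R R' hpk hc
      by_cases hall : ∀ i, R i = R' i
      · exact congrArg φ (funext hall)
      · push_neg at hall
        obtain ⟨i, hi⟩ := hall
        have h1 : φ (Function.update R i (R' i)) = φ R := by
          apply hnb
          rw [hφ, hφ, Function.update_self]
          have hmem := hS.2.1 R i (R' i) (hpk i).symm
          by_cases h : i ∈ S R
          · rw [if_pos (hmem.mp h), if_pos h, ← hpk i]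
          · rw [if_neg (fun hh => h (hmem.mpr hh)), if_neg h]
        rw [← h1]
        apply ih
        · intro j
          rcases eq_or_ne j i with rfl | hj
          · simp
          · simp [Function.update_of_ne hj, hpk j]
        · have hiin : i ∈ Finset.univ.filter fun j => R j ≠ R' j := by simp [hi]
          have hsub : (Finset.univ.filter fun j => Function.update R i (R' i) j ≠ R' j) ⊆
              (Finset.univ.filter fun j => R j ≠ R' j).erase i := by
            intro j hj
            simp only [Finset.mem_filter, Finset.mem_univ, true_and] at hj
            rcases eq_or_ne j i with rfl | hne
            · simp at hj
            · exact Finset.mem_erase.mpr ⟨hne, by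
                simpa [Finset.mem_filter, Function.update_of_ne hne] using hj⟩
          have := Finset.card_le_card hsub
          rw [Finset.card_erase_of_mem hiin] at this
          omega
  intro R R' hpk
  exact key _ R R' hpk le_rfl

/-- an agreeable rule is non-bossy if and only if its refined
agreeable selection is peaks-only and unchanged by unilateral deviations of
agents outside both refined coalitions. -/
theorem stmt_15 (n : ℕ) (hn : 2 ≤ n) (Ω : ℝ) (hΩ : 0 < Ω)
    (S : (Fin n → Pref) → Finset (Fin n)) (hS : AgreeableSelection Ω S)
    (φ : (Fin n → Pref) → Fin n → ℝ)
    (hφ : ∀ R i, φ R i = if i ∈ S R then (R i).peak else Ω / n) :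
    NonBossy φ ↔
      ((∀ R R' : Fin n → Pref, (∀ i, (R i).peak = (R' i).peak) →
          refinedSel Ω S R = refinedSel Ω S R') ∧
       (∀ (R : Fin n → Pref) (i : Fin n) (Ri' : Pref),
          i ∉ refinedSel Ω S R → i ∉ refinedSel Ω S (Function.update R i Ri') →
          refinedSel Ω S R = refinedSel Ω S (Function.update R i Ri'))) := by
  have L1 := aux_L1 Ω S φ hφ
  have L0 := aux_L0 Ω S φ hφ
  constructor
  · intro hnb
    constructor
    · intro R R' hpk
      have hφeq := aux_peaks_only Ω S hS φ hφ hnb R R' hpk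
      ext j
      rw [L1, L1, hφeq]
    · intro R i Ri' hout hout'
      set R' := Function.update R i Ri' with hR'
      have hRi : φ R i = Ω / n := by rw [L0, if_neg hout]
      have hRi' : φ R' i = Ω / n := by rw [L0, if_neg hout']
      have hφeq : φ R' = φ R := hnb R i Ri' (by rw [hRi, hRi'])
      ext j
      rw [L1, L1, hφeq]
  · rintro ⟨h1, h2⟩ R i Ri' heq
    set R' := Function.update R i Ri' with hR'
    have hRj : ∀ j, j ≠ i → R' j = R j := fun j hj => Function.update_of_ne hj _ _
    by_cases hi : i ∈ refinedSel Ω S R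
    · have hpk_ne : (R i).peak ≠ Ω / n :=
        (Finset.mem_filter.mp hi).2
      have hφR : φ R i = (R i).peak := by rw [L0, if_pos hi]
      have hφR' : φ R' i ≠ Ω / n := by rw [heq, hφR]; exact hpk_ne
      have hi' : i ∈ refinedSel Ω S R' := (L1 R' i).mpr hφR'
      have hpk' : (R' i).peak = (R i).peak := by
        have : φ R' i = (R' i).peak := by rw [L0, if_pos hi']
        rw [← this, heq, hφR]
      have hpk : ∀ j, (R j).peak = (R' j).peak := by
        intro j
        rcases eq_or_ne j i with rfl | hj
        · exact hpk'.symm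
        · rw [hRj j hj]
      have hsel : refinedSel Ω S R = refinedSel Ω S R' := h1 R R' hpk
      funext j
      rw [L0 R j, L0 R' j, ← hsel, ← hpk j]
    · have hRi : φ R i = Ω / n := by rw [L0, if_neg hi]
      have hi' : i ∉ refinedSel Ω S R' := by
        rw [L1]; simp [heq, hRi]
      have hsel : refinedSel Ω S R = refinedSel Ω S R' := h2 R i Ri' hi hi'
      funext j
      rcases eq_or_ne j i with rfl | hj
      · exact heq
      · rw [L0 R j, L0 R' j, ← hsel, hRj j hj]
end

section
/- Any rule that satisfies non-obvious manipulability, own-peak-onliness, and peak order preservation also satisfies the equal division guarantee: if t(Rᵢ) = Ω/n then φᵢ(R) = Ω/n. -/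
open Finset

variable {n : ℕ}

/-- Peak order preservation: an agent with a weakly smaller peak gets a weakly
smaller allotment. -/
def PeakOrderPreserving {n : ℕ} (φ : (Fin n → Pref) → Fin n → ℝ) : Prop :=
  ∀ (R : Fin n → Pref) (i j : Fin n), i ≠ j → (R i).peak ≤ (R j).peak → φ R i ≤ φ R j



/-- Build a preference from a utility function with a unique maximizer. -/
noncomputable def prefOfFun (u : ℝ → ℝ) (p : ℝ) (hp : 0 ≤ p)
    (hmax : ∀ x, 0 ≤ x → x ≠ p → u x < u p) : Pref where
  R := fun x y => u y ≤ u x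
  total := fun x y _ _ => le_total (u y) (u x)
  trans := fun _ _ _ hxy hyz => le_trans hyz hxy
  peak := p
  peak_nonneg := hp
  peak_max := fun x hx => by
    rcases eq_or_ne x p with h | h
    · subst h; exact le_rfl
    · exact (hmax x hx h).le
  peak_unique := fun x hx hxp => by
    by_contra h
    exact absurd hxp (not_le.mpr (hmax x hx h))

lemma prefOfFun_P (u : ℝ → ℝ) (p : ℝ) (hp : 0 ≤ p)
    (hmax : ∀ x, 0 ≤ x → x ≠ p → u x < u p) (x y : ℝ) :
    (prefOfFun u p hp hmax).P x y ↔ u y < u x := by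
  show (u y ≤ u x ∧ ¬ u x ≤ u y) ↔ u y < u x
  exact (lt_iff_le_not_ge).symm

/-- The canonical preference with peak 0. -/
noncomputable def zeroPref : Pref :=
  prefOfFun (fun y => -y) 0 le_rfl
    (fun x hx hne => by
      have : 0 < x := lt_of_le_of_ne hx (Ne.symm hne)
      simpa using this)

lemma zeroPref_peak : zeroPref.peak = 0 := rfl

/-- If an agent reports a peak-0 preference, POP forces at most the equal share. -/
lemma share_le_of_peak_zero {n : ℕ} (hn : 0 < n) (Ω : ℝ)
    (φ : (Fin n → Pref) → Fin n → ℝ)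
    (hfeas : ∀ R, Feasible Ω (φ R))
    (hpop : PeakOrderPreserving φ)
    (T : Fin n → Pref) (i : Fin n) (hpk : (T i).peak = 0) :
    φ T i ≤ Ω / n := by
  have hnR : (0 : ℝ) < (n : ℝ) := by exact_mod_cast hn
  have hle : ∀ j, φ T i ≤ φ T j := by
    intro j
    rcases eq_or_ne i j with rfl | hne
    · exact le_rfl
    · exact hpop T i j hne (by rw [hpk]; exact (T j).peak_nonneg)
  have hsum : ∑ _j : Fin n, φ T i ≤ ∑ j, φ T j :=
    Finset.sum_le_sum (fun j _ => hle j)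
  rw [(hfeas T).2, Finset.sum_const, Finset.card_univ, Fintype.card_fin,
    nsmul_eq_mul] at hsum
  rw [le_div_iff₀ hnR]
  linarith

lemma share_le_total {n : ℕ} (Ω : ℝ)
    (φ : (Fin n → Pref) → Fin n → ℝ)
    (hfeas : ∀ R, Feasible Ω (φ R))
    (T : Fin n → Pref) (i : Fin n) : φ T i ≤ Ω := by
  have := Finset.single_le_sum (f := φ T) (fun j _ => (hfeas T).1 j)
    (Finset.mem_univ i)
  rwa [(hfeas T).2] at this

/-- Every agent receives at most the equal share or exactly their own peak. -/
lemma cap_or_peak {n : ℕ} (hn : 0 < n) (Ω : ℝ)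
    (φ : (Fin n → Pref) → Fin n → ℝ)
    (hfeas : ∀ R, Feasible Ω (φ R))
    (hnom : NonObviouslyManipulable φ)
    (hopo : OwnPeakOnly φ)
    (hpop : PeakOrderPreserving φ)
    (T : Fin n → Pref) (i : Fin n) :
    φ T i ≤ Ω / n ∨ φ T i = (T i).peak := by
  by_contra hcon
  push_neg at hcon
  obtain ⟨hgt, hne⟩ := hcon
  set P : ℝ := (T i).peak with hP
  set x : ℝ := φ T i with hx
  set u : ℝ → ℝ := fun y => if y = P then 2 else if y ≤ Ω / n then 1 else 0 with hu
  have humax : ∀ y, 0 ≤ y → y ≠ P → u y < u P := by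
    intro y _ hyP
    simp only [hu, if_neg hyP, if_pos rfl]
    split <;> norm_num
  have hux : u x = 0 := by
    simp only [hu, if_neg hne, if_neg (not_le.mpr hgt)]
  have hulow : ∀ w, w ≤ Ω / n → 0 < u w := by
    intro w hw
    by_cases h : w = P
    · simp only [hu]; rw [if_pos h]; norm_num
    · simp only [hu]; rw [if_neg h, if_pos hw]; norm_num
  set QP : Pref := prefOfFun u P (T i).peak_nonneg humax with hQP
  have hQPpeak : QP.peak = (T i).peak := rfl
  set T' : Fin n → Pref := Function.update T i QP with hT'
  have hT'i : T' i = QP := Function.update_self i QP T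
  have hxT' : φ T' i = x := hopo T i QP hQPpeak
  have hstrict : ∀ w, w ≤ Ω / n → QP.P w x := by
    intro w hw
    rw [hQP, prefOfFun_P]
    rw [hux]; exact hulow w hw
  apply hnom i QP zeroPref
  constructor
  · refine ⟨T', hT'i, ?_⟩
    rw [hxT']
    apply hstrict
    apply share_le_of_peak_zero hn Ω φ hfeas hpop
    rw [Function.update_self]
    rfl
  · rintro x' ⟨U, hU1, hU2⟩
    refine ⟨x, ⟨T', hT'i, hxT'⟩, ?_⟩
    apply hstrict
    rw [← hU2]
    apply share_le_of_peak_zero hn Ω φ hfeas hpop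
    rw [hU1]
    rfl

/-- An agent reporting a peak above `Ω` receives exactly the equal share. -/
lemma share_eq_of_high_peak {n : ℕ} (hn : 0 < n) (Ω : ℝ)
    (φ : (Fin n → Pref) → Fin n → ℝ)
    (hfeas : ∀ R, Feasible Ω (φ R))
    (hnom : NonObviouslyManipulable φ)
    (hopo : OwnPeakOnly φ)
    (hpop : PeakOrderPreserving φ)
    (T : Fin n → Pref) (i : Fin n) (hpk : Ω < (T i).peak) :
    φ T i = Ω / n := by
  have hnR : (0 : ℝ) < (n : ℝ) := by exact_mod_cast hn
  have hiΩ : φ T i ≤ Ω := share_le_total Ω φ hfeas T i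
  have h1 : φ T i ≤ Ω / n := by
    rcases cap_or_peak hn Ω φ hfeas hnom hopo hpop T i with h | h
    · exact h
    · rw [h] at hiΩ; linarith
  rcases eq_or_lt_of_le h1 with h | hlt
  · exact h
  exfalso
  have hex : ∃ j, Ω / n < φ T j := by
    by_contra hall
    push_neg at hall
    have hs : ∑ j, φ T j < ∑ _j : Fin n, Ω / n :=
      Finset.sum_lt_sum (fun j _ => hall j) ⟨i, Finset.mem_univ i, hlt⟩
    rw [(hfeas T).2, Finset.sum_const, Finset.card_univ, Fintype.card_fin,
      nsmul_eq_mul, mul_div_cancel₀ Ω (ne_of_gt hnR)] at hs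
    exact lt_irrefl Ω hs
  obtain ⟨j, hj⟩ := hex
  have hji : j ≠ i := by
    intro h; rw [h] at hj; linarith
  have hjpk : φ T j = (T j).peak := by
    rcases cap_or_peak hn Ω φ hfeas hnom hopo hpop T j with h | h
    · linarith
    · exact h
  have hjΩ : φ T j ≤ Ω := share_le_total Ω φ hfeas T j
  rcases le_total (T j).peak (T i).peak with hc | hc
  · have := hpop T j i hji hc
    linarith
  · linarith

/-- A canonical preference with peak `Ω + 1`. -/
noncomputable def highPref (Ω : ℝ) (hΩ : 0 < Ω) : Pref :=
  prefOfFun (fun y => if y = Ω + 1 then 1 else 0) (Ω + 1) (by linarith)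
    (fun x _ hne => by simp [hne])

lemma highPref_peak (Ω : ℝ) (hΩ : 0 < Ω) : (highPref Ω hΩ).peak = Ω + 1 := rfl

/-- non-obvious manipulability, own-peak-onliness, and peak order
preservation imply the equal division guarantee. -/
theorem stmt_17 (n : ℕ) (hn : 2 ≤ n) (Ω : ℝ) (hΩ : 0 < Ω)
    (φ : (Fin n → Pref) → Fin n → ℝ)
    (hfeas : ∀ R, Feasible Ω (φ R))
    (hnom : NonObviouslyManipulable φ)
    (hopo : OwnPeakOnly φ)
    (hpop : PeakOrderPreserving φ) :
    EqualDivisionGuarantee Ω φ := by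
  intro R i hpk
  by_contra hne
  have hnR : 0 < n := by omega
  have hP : (R i).P (Ω / n) (φ R i) := by
    constructor
    · have := (R i).peak_max (φ R i) ((hfeas R).1 i)
      rwa [hpk] at this
    · intro hcon
      apply hne
      have := (R i).peak_unique (φ R i) ((hfeas R).1 i) (by rwa [hpk])
      rw [this, hpk]
  apply hnom i (R i) (highPref Ω hΩ)
  constructor
  · refine ⟨R, rfl, ?_⟩
    have hup : φ (Function.update R i (highPref Ω hΩ)) i = Ω / n := by
      apply share_eq_of_high_peak hnR Ω φ hfeas hnom hopo hpop
      rw [Function.update_self, highPref_peak]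
      linarith
    rw [hup]
    exact hP
  · rintro x' ⟨U, hU1, hU2⟩
    have hx' : x' = Ω / n := by
      rw [← hU2]
      apply share_eq_of_high_peak hnR Ω φ hfeas hnom hopo hpop
      rw [hU1, highPref_peak]
      linarith
    subst hx'
    exact ⟨φ R i, ⟨R, rfl, rfl⟩, hP⟩
end

section
/- A rule satisfies unanimity, non-obvious manipulability, own-peak-onliness, and peak order preservation if and only if it is a peak order preserving agreeable rule. -/
open Finset

variable {n : ℕ}

/-! ### Auxiliary constructions and lemmas -/

/-- A symmetric single-peaked preference with peak `c`. -/
noncomputable def symmPref (c : ℝ) (hc : 0 ≤ c) : Pref where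
  R x y := |x - c| ≤ |y - c|
  total x y _ _ := le_total _ _
  trans _ _ _ := le_trans
  peak := c
  peak_nonneg := hc
  peak_max x _ := by simp [abs_nonneg]
  peak_unique x _ h := by
    have h0 : |x - c| ≤ 0 := by simpa using h
    have h1 : |x - c| = 0 := le_antisymm h0 (abs_nonneg _)
    have := abs_eq_zero.mp h1
    linarith

open scoped Classical in
/-- Tier function: `p` on top, `a` at the bottom, everything else in between. -/
noncomputable def tier (p a x : ℝ) : ℕ := if x = p then 2 else if x = a then 0 else 1

lemma tier_self (p a : ℝ) : tier p a p = 2 := by simp [tier]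

lemma tier_le_two (p a x : ℝ) : tier p a x ≤ 2 := by
  classical
  unfold tier
  split_ifs <;> omega

lemma tier_eq_two {p a x : ℝ} (h : 2 ≤ tier p a x) : x = p := by
  classical
  by_contra hxp
  have h1 : tier p a x ≤ 1 := by
    unfold tier
    rw [if_neg hxp]
    split_ifs <;> omega
  omega

lemma tier_of_ne {p a x : ℝ} (hxa : x ≠ a) : 1 ≤ tier p a x := by
  classical
  by_cases h1 : x = p
  · subst h1
    rw [tier_self]
    omega
  · unfold tier
    rw [if_neg h1, if_neg hxa]

lemma tier_bot {p a : ℝ} (hap : a ≠ p) : tier p a a = 0 := by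
  simp [tier, hap]

/-- Three-tier preference with peak `p` and unique worst point `a`. -/
noncomputable def tierPref (p a : ℝ) (hp : 0 ≤ p) : Pref where
  R x y := tier p a y ≤ tier p a x
  total x y _ _ := le_total _ _
  trans _ _ _ h1 h2 := le_trans h2 h1
  peak := p
  peak_nonneg := hp
  peak_max x _ := by
    show tier p a x ≤ tier p a p
    rw [tier_self]
    exact tier_le_two p a x
  peak_unique x _ h := by
    have h' : tier p a p ≤ tier p a x := h
    rw [tier_self] at h'
    exact tier_eq_two h'

lemma tierPref_P {p a : ℝ} (hp : 0 ≤ p) (hap : a ≠ p) {x : ℝ} (hxa : x ≠ a) :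
    (tierPref p a hp).P x a := by
  have ha0 : tier p a a = 0 := tier_bot hap
  have hx1 : 1 ≤ tier p a x := tier_of_ne hxa
  constructor
  · show tier p a a ≤ tier p a x
    omega
  · show ¬ tier p a x ≤ tier p a a
    omega

/-- Each allotment is at most Ω. -/
lemma allot_le {n : ℕ} {Ω : ℝ} {φ : (Fin n → Pref) → Fin n → ℝ}
    (hfeas : ∀ R, Feasible Ω (φ R)) (R : Fin n → Pref) (i : Fin n) : φ R i ≤ Ω := by
  have h := (hfeas R).2
  calc φ R i ≤ ∑ j, φ R j :=
        Finset.single_le_sum (fun j _ => (hfeas R).1 j) (Finset.mem_univ i)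
    _ = Ω := h

/-- Key NOM lemma: a non-peak allotment must be available for every reported peak. -/
lemma key_exists {n : ℕ} {φ : (Fin n → Pref) → Fin n → ℝ}
    (hnom : NonObviouslyManipulable φ) (hopo : OwnPeakOnly φ)
    (R : Fin n → Pref) (i : Fin n) (ha : φ R i ≠ (R i).peak)
    (q : ℝ) (hq : 0 ≤ q) :
    ∃ R' : Fin n → Pref, (R' i).peak = q ∧ φ R' i = φ R i := by
  by_contra hcon
  push_neg at hcon
  have hp : (0:ℝ) ≤ (R i).peak := (R i).peak_nonneg
  set Rt := tierPref (R i).peak (φ R i) hp with hRt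
  set Rl := symmPref q hq with hRl
  have hQval : φ (Function.update R i Rt) i = φ R i := hopo R i Rt rfl
  have hmemA : φ R i ∈ OptionSet φ i Rt :=
    ⟨Function.update R i Rt, Function.update_self .., hQval⟩
  apply hnom i Rt Rl
  refine ⟨⟨Function.update R i Rt, Function.update_self .., ?_⟩, ?_⟩
  · rw [hQval]
    have hi : ((Function.update (Function.update R i Rt) i Rl) i).peak = q := by
      rw [Function.update_self]
      rfl
    exact tierPref_P hp ha (hcon _ hi)
  · rintro x' ⟨R'', hR''i, rfl⟩
    have hpk : (R'' i).peak = q := by rw [hR''i]; rfl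
    exact ⟨φ R i, hmemA, tierPref_P hp ha (hcon R'' hpk)⟩

/-- A non-peak allotment is at most equal division. -/
lemma nonpeak_le {n : ℕ} {Ω : ℝ} {φ : (Fin n → Pref) → Fin n → ℝ}
    (hn : 0 < n) (hfeas : ∀ R, Feasible Ω (φ R)) (hnom : NonObviouslyManipulable φ)
    (hopo : OwnPeakOnly φ) (hpop : PeakOrderPreserving φ)
    (R : Fin n → Pref) (i : Fin n) (ha : φ R i ≠ (R i).peak) :
    φ R i ≤ Ω / n := by
  obtain ⟨R0, hpk, hval⟩ := key_exists hnom hopo R i ha 0 le_rfl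
  have hle : ∀ j, φ R0 i ≤ φ R0 j := by
    intro j
    rcases eq_or_ne i j with rfl | hij
    · exact le_rfl
    · exact hpop R0 i j hij (by rw [hpk]; exact (R0 j).peak_nonneg)
  have hnR : (0:ℝ) < n := by exact_mod_cast hn
  have h1 : ∑ _j : Fin n, φ R0 i ≤ ∑ j, φ R0 j := Finset.sum_le_sum (fun j _ => hle j)
  rw [(hfeas R0).2, Finset.sum_const, Finset.card_univ, Fintype.card_fin,
    nsmul_eq_mul] at h1
  rw [← hval, le_div_iff₀ hnR]
  linarith

/-- Dichotomy: every allotment is either the own peak or equal division. -/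
lemma dichotomy {n : ℕ} {Ω : ℝ} {φ : (Fin n → Pref) → Fin n → ℝ}
    (hn : 0 < n) (hΩ : 0 < Ω) (hfeas : ∀ R, Feasible Ω (φ R))
    (hnom : NonObviouslyManipulable φ) (hopo : OwnPeakOnly φ)
    (hpop : PeakOrderPreserving φ) (R : Fin n → Pref) (i : Fin n) :
    φ R i = (R i).peak ∨ φ R i = Ω / n := by
  by_contra h
  push_neg at h
  obtain ⟨hne, hneq⟩ := h
  have hnR : (0:ℝ) < n := by exact_mod_cast hn
  have hale : φ R i ≤ Ω / n := nonpeak_le hn hfeas hnom hopo hpop R i hne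
  have halt : φ R i < Ω / n := lt_of_le_of_ne hale hneq
  obtain ⟨R1, hpk1, hval1⟩ := key_exists hnom hopo R i hne (Ω + Ω) (by linarith)
  have hj : ∀ j, j ≠ i → φ R1 j ≤ Ω / n := by
    intro j hji
    by_cases hjp : φ R1 j = (R1 j).peak
    · by_cases hple : (R1 j).peak ≤ (R1 i).peak
      · have h2 := hpop R1 j i hji hple
        rw [hval1] at h2
        linarith
      · push_neg at hple
        have h2 : φ R1 j ≤ Ω := allot_le hfeas R1 j
        rw [hjp] at h2
        rw [hpk1] at hple
        linarith
    · exact nonpeak_le hn hfeas hnom hopo hpop R1 j hjp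
  have hsplit : φ R1 i + ∑ j ∈ Finset.univ.erase i, φ R1 j = Ω := by
    rw [Finset.add_sum_erase _ _ (Finset.mem_univ i)]
    exact (hfeas R1).2
  have hbound : ∑ j ∈ Finset.univ.erase i, φ R1 j ≤
      ((Finset.univ.erase i).card : ℝ) * (Ω / n) := by
    calc ∑ j ∈ Finset.univ.erase i, φ R1 j
        ≤ ∑ _j ∈ Finset.univ.erase i, (Ω / n) :=
          Finset.sum_le_sum (fun j hjm => hj j (Finset.ne_of_mem_erase hjm))
      _ = ((Finset.univ.erase i).card : ℝ) * (Ω / n) := by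
          rw [Finset.sum_const, nsmul_eq_mul]
  have hcard : ((Finset.univ.erase i).card : ℝ) = (n : ℝ) - 1 := by
    rw [Finset.card_erase_of_mem (Finset.mem_univ i), Finset.card_univ, Fintype.card_fin]
    have : 1 ≤ n := hn
    push_cast [Nat.cast_sub this]
    ring
  have hmul : (n : ℝ) * (Ω / n) = Ω := mul_div_cancel₀ Ω (ne_of_gt hnR)
  rw [hcard] at hbound
  rw [hval1] at hsplit
  nlinarith


/-- Algebraic identity used on both sides. -/
lemma agree_sum_algebra {n : ℕ} {Ω : ℝ} (hn : (n:ℝ) ≠ 0) (m m' : ℕ) (h : m + m' = n)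
    (T : ℝ) (hT : T + (m' : ℝ) * (Ω / n) = Ω) : T = (m : ℝ) / n * Ω := by
  have hc : (m : ℝ) + (m' : ℝ) = (n : ℝ) := by exact_mod_cast h
  field_simp at hT ⊢
  linear_combination hT - Ω * hc

/-- a rule satisfies unanimity, non-obvious manipulability,
own-peak-onliness and peak order preservation if and only if it is a peak order
preserving agreeable rule. -/
theorem stmt_18 (n : ℕ) (hn : 2 ≤ n) (Ω : ℝ) (hΩ : 0 < Ω)
    (φ : (Fin n → Pref) → Fin n → ℝ) :
    ((∀ R, Feasible Ω (φ R)) ∧ Unanimity Ω φ ∧ NonObviouslyManipulable φ ∧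
      OwnPeakOnly φ ∧ PeakOrderPreserving φ) ↔
    (IsAgreeableRule Ω φ ∧ PeakOrderPreserving φ) := by
  classical
  have hn0 : 0 < n := by omega
  have hnR : (0:ℝ) < n := by exact_mod_cast hn0
  have hnne : (n:ℝ) ≠ 0 := ne_of_gt hnR
  have hΩn : (0:ℝ) < Ω / n := div_pos hΩ hnR
  constructor
  · rintro ⟨hfeas, huna, hnom, hopo, hpop⟩
    have hdich := dichotomy hn0 hΩ hfeas hnom hopo hpop
    refine ⟨⟨fun R => Finset.univ.filter (fun i => φ R i = (R i).peak), ⟨?_, ?_, ?_⟩, ?_⟩, hpop⟩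
    · -- agreeable coalition
      intro R
      unfold AgreeableCoalition
      have hsplit := Finset.sum_filter_add_sum_filter_not Finset.univ
        (fun i => φ R i = (R i).peak) (φ R)
      have h1 : ∑ j ∈ Finset.univ.filter (fun i => φ R i = (R i).peak), φ R j =
          ∑ j ∈ Finset.univ.filter (fun i => φ R i = (R i).peak), (R j).peak :=
        Finset.sum_congr rfl (fun j hj => (Finset.mem_filter.mp hj).2)
      have h2 : ∑ j ∈ Finset.univ.filter (fun i => ¬ φ R i = (R i).peak), φ R j =
          ((Finset.univ.filter (fun i => ¬ φ R i = (R i).peak)).card : ℝ) * (Ω / n) := by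
        rw [Finset.sum_congr rfl
          (fun j hj => (hdich R j).resolve_left (Finset.mem_filter.mp hj).2),
          Finset.sum_const, nsmul_eq_mul]
      have hcards : (Finset.univ.filter (fun i => φ R i = (R i).peak)).card +
          (Finset.univ.filter (fun i => ¬ φ R i = (R i).peak)).card = n := by
        have h := Finset.card_filter_add_card_filter_not
          (s := (Finset.univ : Finset (Fin n))) (p := fun i => φ R i = (R i).peak)
        simpa using h
      apply agree_sum_algebra hnne _ _ hcards
      rw [← h2, ← h1, hsplit]
      exact (hfeas R).2
    · -- own-peak-only membership
      intro R i Ri' hpk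
      simp only [Finset.mem_filter, Finset.mem_univ, true_and]
      rw [hopo R i Ri' hpk, Function.update_self, hpk]
    · -- unanimity for N
      intro R hag
      have hsum : ∑ j, (R j).peak = Ω := by
        have := hag
        unfold AgreeableCoalition at this
        rw [Finset.card_univ, Fintype.card_fin, div_self hnne, one_mul] at this
        exact this
      have := huna R hsum
      apply Finset.filter_true_of_mem
      intro i _
      exact this i
    · intro R i
      by_cases hmem : φ R i = (R i).peak
      · rw [if_pos (by simp [hmem]), hmem]
      · rw [if_neg (by simp [hmem])]
        exact (hdich R i).resolve_left hmem
  · rintro ⟨⟨S, ⟨hagree, hinv, hallagree⟩, hval⟩, hpop⟩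
    have hΩ1 : (0:ℝ) ≤ Ω + 1 := by linarith
    -- the sum of allotments is Ω
    have sum_val : ∀ R : Fin n → Pref, ∑ i, φ R i = Ω := by
      intro R
      have h1 : ∑ i, φ R i = ∑ i, (if i ∈ S R then (R i).peak else Ω / n) :=
        Finset.sum_congr rfl (fun i _ => hval R i)
      have hsplit := Finset.sum_filter_add_sum_filter_not Finset.univ
        (fun i => i ∈ S R) (fun i => if i ∈ S R then (R i).peak else Ω / n)
      have hfil : Finset.univ.filter (fun i => i ∈ S R) = S R := by
        ext j; simp
      have h2 : ∑ i ∈ Finset.univ.filter (fun i => i ∈ S R),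
          (if i ∈ S R then (R i).peak else Ω / n) = ∑ i ∈ S R, (R i).peak := by
        rw [hfil]
        exact Finset.sum_congr rfl (fun i hi => if_pos hi)
      have h3 : ∑ i ∈ Finset.univ.filter (fun i => ¬ i ∈ S R),
          (if i ∈ S R then (R i).peak else Ω / n) =
          ((Finset.univ.filter (fun i => ¬ i ∈ S R)).card : ℝ) * (Ω / n) := by
        rw [Finset.sum_congr rfl
          (fun i hi => if_neg (Finset.mem_filter.mp hi).2), Finset.sum_const, nsmul_eq_mul]
      have hcards : (S R).card + (Finset.univ.filter (fun i => ¬ i ∈ S R)).card = n := by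
        have h := Finset.card_filter_add_card_filter_not
          (s := (Finset.univ : Finset (Fin n))) (p := fun i => i ∈ S R)
        rw [hfil] at h
        simpa using h
      have hag := hagree R
      unfold AgreeableCoalition at hag
      have hcR : ((S R).card : ℝ) + ((Finset.univ.filter (fun i => ¬ i ∈ S R)).card : ℝ)
          = (n : ℝ) := by exact_mod_cast hcards
      rw [h1, ← hsplit, h2, h3, hag]
      field_simp
      nlinarith [hcR]
    refine ⟨?_, ?_, ?_, ?_, hpop⟩
    · -- Feasible
      intro R
      constructor
      · intro i
        rw [hval]
        split_ifs
        · exact (R i).peak_nonneg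
        · exact le_of_lt hΩn
      · exact sum_val R
    · -- Unanimity
      intro R hsum i
      have hag : AgreeableCoalition Ω R Finset.univ := by
        unfold AgreeableCoalition
        rw [Finset.card_univ, Fintype.card_fin, div_self hnne, one_mul]
        exact hsum
      rw [hval, if_pos (by rw [hallagree R hag]; exact Finset.mem_univ i)]
    · -- NOM
      rintro i Ri Ri' ⟨-, hdom⟩
      -- first : Ω / n belongs to the option set of Ri'
      have hmemΩn : (Ω / n) ∈ OptionSet φ i Ri' := by
        set R₀ : Fin n → Pref :=
          Function.update (fun _ => symmPref (Ω + 1) hΩ1) i Ri' with hR₀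
        have hR₀i : R₀ i = Ri' := Function.update_self ..
        refine ⟨R₀, hR₀i, ?_⟩
        by_cases hc : Ri'.peak = Ω / n
        · rw [hval]
          split_ifs with h
          · rw [hR₀i, hc]
          · rfl
        · rw [hval, if_neg ?_]
          intro hmem
          have hag := hagree R₀
          unfold AgreeableCoalition at hag
          have hsum : ∑ j ∈ S R₀, (R₀ j).peak =
              Ri'.peak + ((S R₀).erase i).card * (Ω + 1) := by
            rw [← Finset.add_sum_erase _ _ hmem, hR₀i]
            congr 1
            rw [Finset.sum_congr rfl (fun j hj => ?_), Finset.sum_const, nsmul_eq_mul]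
            have hji : j ≠ i := Finset.ne_of_mem_erase hj
            rw [hR₀]
            rw [Function.update_of_ne hji]
            rfl
          have hcard : ((S R₀).erase i).card + 1 = (S R₀).card :=
            Finset.card_erase_add_one hmem
          have hklen : (S R₀).card ≤ n := by
            calc (S R₀).card ≤ Finset.univ.card := Finset.card_le_univ _
              _ = n := by rw [Finset.card_univ, Fintype.card_fin]
          rcases Nat.eq_zero_or_pos ((S R₀).erase i).card with hk0 | hkpos
          · -- coalition is {i}: peak = Ω / n, contradiction
            apply hc
            rw [hsum, hk0] at hag
            have hc1 : (S R₀).card = 1 := by omega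
            rw [hc1] at hag
            push_cast at hag
            rw [div_mul_eq_mul_div, one_mul] at hag
            linarith [hag]
          · -- coalition has another member: sum too big
            have hk1 : (1:ℝ) ≤ (((S R₀).erase i).card : ℝ) := by exact_mod_cast hkpos
            have hcleR : ((S R₀).card : ℝ) ≤ (n : ℝ) := by exact_mod_cast hklen
            have hub : ((S R₀).card : ℝ) / n * Ω ≤ Ω := by
              rw [div_mul_eq_mul_div, div_le_iff₀ hnR]
              nlinarith
            rw [hsum] at hag
            have hp0 : (0:ℝ) ≤ Ri'.peak := Ri'.peak_nonneg
            nlinarith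
      obtain ⟨x, ⟨R₂, hR₂, rfl⟩, hPx⟩ := hdom (Ω / n) hmemΩn
      have hx := hval R₂ i
      rw [hR₂] at hx
      rcases (em (i ∈ S R₂)) with h | h
      · rw [if_pos h] at hx
        exact hPx.2 (by rw [hx]; exact Ri.peak_max (Ω / n) (le_of_lt hΩn))
      · rw [if_neg h] at hx
        rw [hx] at hPx
        exact hPx.2 hPx.1
    · -- OwnPeakOnly
      intro R i Ri' hpk
      rw [hval, hval]
      have hm := hinv R i Ri' hpk
      by_cases h : i ∈ S R
      · rw [if_pos (hm.mp h), if_pos h, Function.update_self, hpk]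
      · rw [if_neg (fun hc => h (hm.mpr hc)), if_neg h]
end
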